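/- arXiv:math/0010211 — 10 statements merged into one kernel-verified Lean document; each statement's English description precedes it below -/
import Mathlib

section
/- Let K be a field and consider the polynomial ring K[x_1,…,x_n,y_1,…,y_n]. Let R be the ideal generated by polynomials p_1,…,p_m involving only the variables x_1,…,x_n, and let S be the ideal generated by polynomials q_1,…,q_k involving only the variables y_1,…,y_n. Suppose φ : K[x_1,…,x_n]/R₀ → K[y_1,…,y_n]/S₀ is a K-algebra isomorphism (where R₀ = ⟨p_1,…,p_m⟩ in K[x_1,…,x_n] and S₀ = ⟨q_1,…,q_k⟩ in K[y_1,…,y_n]), and suppose u_1,…,u_n ∈ K[x_1,…,x_n] satisfy φ(u_i + R₀) = y_i + S₀ for every i. Let U be the ideal of K[x_1,…,x_n,y_1,…,y_n] generated by y_1 − u_1, …, y_n − u_n. Then S ⊆ R + U. -/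
open MvPolynomial

/-- The key inclusion `S ⊆ R + U` in the proof of Theorem 1.1.  The polynomial ring
`K[x₁,…,xₙ,y₁,…,yₙ]` is modelled as `MvPolynomial (Fin n ⊕ Fin n) K`, with the
`x`-variables indexed by `Sum.inl` and the `y`-variables indexed by `Sum.inr`. -/
theorem S_subset_R_plus_U (K : Type*) [Field K] (n m k : ℕ)
    (p : Fin m → MvPolynomial (Fin n) K) (q : Fin k → MvPolynomial (Fin n) K)
    (R₀ S₀ : Ideal (MvPolynomial (Fin n) K))
    (hR₀ : R₀ = Ideal.span (Set.range p))
    (hS₀ : S₀ = Ideal.span (Set.range q))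
    (φ : (MvPolynomial (Fin n) K ⧸ R₀) ≃ₐ[K] (MvPolynomial (Fin n) K ⧸ S₀))
    (u : Fin n → MvPolynomial (Fin n) K)
    (hu : ∀ i, φ (Ideal.Quotient.mk R₀ (u i)) = Ideal.Quotient.mk S₀ (X i))
    (R S U : Ideal (MvPolynomial (Fin n ⊕ Fin n) K))
    (hR : R = Ideal.span (Set.range fun i => rename (Sum.inl : Fin n → Fin n ⊕ Fin n) (p i)))
    (hS : S = Ideal.span (Set.range fun i => rename (Sum.inr : Fin n → Fin n ⊕ Fin n) (q i)))
    (hU : U = Ideal.span (Set.range fun i =>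
      X (Sum.inr i) - rename (Sum.inl : Fin n → Fin n ⊕ Fin n) (u i))) :
    S ≤ R ⊔ U := by
  rw [hS, Ideal.span_le]
  rintro _ ⟨i, rfl⟩
  -- Step 1: aeval u (q i) ∈ R₀
  have hhom : (φ.toAlgHom.comp ((Ideal.Quotient.mkₐ K R₀).comp (aeval u))) =
      Ideal.Quotient.mkₐ K S₀ := by
    apply MvPolynomial.algHom_ext
    intro j
    simp [hu j]
  have hq0 : Ideal.Quotient.mk S₀ (q i) = 0 := by
    rw [Ideal.Quotient.eq_zero_iff_mem, hS₀]
    exact Ideal.subset_span ⟨i, rfl⟩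
  have h1 : aeval u (q i) ∈ R₀ := by
    have := congrArg (fun f => f (q i)) hhom
    simp only [AlgHom.comp_apply, Ideal.Quotient.mkₐ_eq_mk] at this
    rw [hq0] at this
    have h2 : Ideal.Quotient.mk R₀ (aeval u (q i)) = 0 := by
      have := φ.injective (this.trans (map_zero φ).symm)
      exact this
    rwa [Ideal.Quotient.eq_zero_iff_mem] at h2
  -- Step 2: rename inl of it is in R
  have h2 : rename (Sum.inl : Fin n → Fin n ⊕ Fin n) (aeval u (q i)) ∈ R := by
    have hm : rename (Sum.inl : Fin n → Fin n ⊕ Fin n) (aeval u (q i)) ∈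
        Ideal.map (rename (Sum.inl : Fin n → Fin n ⊕ Fin n)).toRingHom R₀ :=
      Ideal.mem_map_of_mem _ h1
    rw [hR₀, Ideal.map_span, ← Set.range_comp] at hm
    rw [hR]
    exact hm
  -- Step 3: the difference lies in U
  have h3 : rename (Sum.inr : Fin n → Fin n ⊕ Fin n) (q i) -
      rename (Sum.inl : Fin n → Fin n ⊕ Fin n) (aeval u (q i)) ∈ U := by
    rw [← Ideal.Quotient.mk_eq_mk_iff_sub_mem]
    have key : (Ideal.Quotient.mkₐ K U).comp
        (rename (Sum.inr : Fin n → Fin n ⊕ Fin n)) =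
        (Ideal.Quotient.mkₐ K U).comp
          ((rename (Sum.inl : Fin n → Fin n ⊕ Fin n)).comp (aeval u)) := by
      apply MvPolynomial.algHom_ext
      intro j
      simp only [AlgHom.comp_apply, Ideal.Quotient.mkₐ_eq_mk, rename_X, aeval_X]
      rw [Ideal.Quotient.mk_eq_mk_iff_sub_mem, hU]
      exact Ideal.subset_span ⟨j, rfl⟩
    have := congrArg (fun f => f (q i)) key
    simpa using this
  -- Combine
  have : rename (Sum.inr : Fin n → Fin n ⊕ Fin n) (q i) =
      (rename (Sum.inr : Fin n → Fin n ⊕ Fin n) (q i) -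
        rename (Sum.inl : Fin n → Fin n ⊕ Fin n) (aeval u (q i))) +
      rename (Sum.inl : Fin n → Fin n ⊕ Fin n) (aeval u (q i)) := by ring
  show rename (Sum.inr : Fin n → Fin n ⊕ Fin n) (q i) ∈ (R ⊔ U : Ideal _)
  rw [this]
  exact Ideal.add_mem _ (Ideal.mem_sup_right h3) (Ideal.mem_sup_left h2)
end

section
/- Let K be a field and consider the polynomial ring K[x_1,…,x_n,y_1,…,y_n]. Let R be the ideal generated by polynomials p_1,…,p_m involving only the variables x_1,…,x_n, and let S be the ideal generated by polynomials q_1,…,q_k involving only the variables y_1,…,y_n. Suppose φ : K[x_1,…,x_n]/R₀ → K[y_1,…,y_n]/S₀ is a K-algebra isomorphism (where R₀ = ⟨p_1,…,p_m⟩ and S₀ = ⟨q_1,…,q_k⟩ in the respective n-variable rings), with inverse ψ. Suppose u_1,…,u_n ∈ K[x_1,…,x_n] satisfy φ(u_i + R₀) = y_i + S₀ for every i, and v_1,…,v_n ∈ K[y_1,…,y_n] satisfy ψ(v_i + S₀) = x_i + R₀ for every i. Let U = ⟨y_1 − u_1,…,y_n − u_n⟩ and V = ⟨x_1 − v_1,…,x_n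 − v_n⟩ as ideals of K[x_1,…,x_n,y_1,…,y_n]. Then R + U = R + S + U + V as ideals of K[x_1,…,x_n,y_1,…,y_n]. -/
open MvPolynomial

/-- The central ideal identity `R + U = R + S + U + V` in the proof of Theorem 1.1.
The polynomial ring `K[x₁,…,xₙ,y₁,…,yₙ]` is modelled as `MvPolynomial (Fin n ⊕ Fin n) K`,
with the `x`-variables indexed by `Sum.inl` and the `y`-variables indexed by `Sum.inr`;
`ψ = φ.symm` is the inverse isomorphism. -/
theorem R_plus_U_eq_R_plus_S_plus_U_plus_V (K : Type*) [Field K] (n m k : ℕ)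
    (p : Fin m → MvPolynomial (Fin n) K) (q : Fin k → MvPolynomial (Fin n) K)
    (R₀ S₀ : Ideal (MvPolynomial (Fin n) K))
    (hR₀ : R₀ = Ideal.span (Set.range p))
    (hS₀ : S₀ = Ideal.span (Set.range q))
    (φ : (MvPolynomial (Fin n) K ⧸ R₀) ≃ₐ[K] (MvPolynomial (Fin n) K ⧸ S₀))
    (u : Fin n → MvPolynomial (Fin n) K)
    (hu : ∀ i, φ (Ideal.Quotient.mk R₀ (u i)) = Ideal.Quotient.mk S₀ (X i))
    (v : Fin n → MvPolynomial (Fin n) K)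
    (hv : ∀ i, φ.symm (Ideal.Quotient.mk S₀ (v i)) = Ideal.Quotient.mk R₀ (X i))
    (R S U V : Ideal (MvPolynomial (Fin n ⊕ Fin n) K))
    (hR : R = Ideal.span (Set.range fun i => rename (Sum.inl : Fin n → Fin n ⊕ Fin n) (p i)))
    (hS : S = Ideal.span (Set.range fun i => rename (Sum.inr : Fin n → Fin n ⊕ Fin n) (q i)))
    (hU : U = Ideal.span (Set.range fun i =>
      X (Sum.inr i) - rename (Sum.inl : Fin n → Fin n ⊕ Fin n) (u i)))
    (hV : V = Ideal.span (Set.range fun i =>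
      X (Sum.inl i) - rename (Sum.inr : Fin n → Fin n ⊕ Fin n) (v i))) :
    R ⊔ U = R ⊔ S ⊔ U ⊔ V := by
  -- key computation: mk R₀ (aeval u w) = φ.symm (mk S₀ w)
  have hu' : ∀ i, φ.symm (Ideal.Quotient.mk S₀ (X i)) = Ideal.Quotient.mk R₀ (u i) := by
    intro i; rw [← hu i, AlgEquiv.symm_apply_apply]
  have key : ∀ w : MvPolynomial (Fin n) K,
      Ideal.Quotient.mk R₀ (aeval u w) = φ.symm (Ideal.Quotient.mk S₀ w) := by
    have := MvPolynomial.algHom_ext (f := (Ideal.Quotient.mkₐ K R₀).comp (aeval u))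
      (g := (φ.symm.toAlgHom).comp (Ideal.Quotient.mkₐ K S₀))
      (fun i => by simpa using (hu' i).symm)
    intro w
    have h := congrArg (fun F => F w) this
    simpa using h
  -- commuting rename with aeval
  have comm : ∀ w : MvPolynomial (Fin n) K,
      rename (Sum.inl : Fin n → Fin n ⊕ Fin n) (aeval u w) =
        aeval (fun j => rename (Sum.inl : Fin n → Fin n ⊕ Fin n) (u j)) w := by
    have := MvPolynomial.algHom_ext
      (f := (rename (Sum.inl : Fin n → Fin n ⊕ Fin n)).comp (aeval u))
      (g := aeval (fun j => rename (Sum.inl : Fin n → Fin n ⊕ Fin n) (u j)))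
      (fun i => by simp)
    intro w
    have h := congrArg (fun F => F w) this
    simpa using h
  -- modulo U, rename inr w is congruent to aeval (rename inl ∘ u) w
  have hUmem : ∀ j, X (Sum.inr j) -
      rename (Sum.inl : Fin n → Fin n ⊕ Fin n) (u j) ∈ U := by
    intro j; rw [hU]; exact Ideal.subset_span ⟨j, rfl⟩
  have modU : ∀ w : MvPolynomial (Fin n) K,
      rename (Sum.inr : Fin n → Fin n ⊕ Fin n) w -
        aeval (fun j => rename (Sum.inl : Fin n → Fin n ⊕ Fin n) (u j)) w ∈ U := by
    have hext := MvPolynomial.algHom_ext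
      (f := (Ideal.Quotient.mkₐ K U).comp (rename (Sum.inr : Fin n → Fin n ⊕ Fin n)))
      (g := (Ideal.Quotient.mkₐ K U).comp
        (aeval (fun j => rename (Sum.inl : Fin n → Fin n ⊕ Fin n) (u j))))
      (fun i => by
        simp only [AlgHom.comp_apply, rename_X, aeval_X, Ideal.Quotient.mkₐ_eq_mk]
        exact Ideal.Quotient.eq.mpr (hUmem i))
    intro w
    have h := congrArg (fun F => F w) hext
    simp only [AlgHom.comp_apply, Ideal.Quotient.mkₐ_eq_mk] at h
    exact Ideal.Quotient.eq.mp h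
  -- rename inl maps R₀ into R
  have hRmap : ∀ w ∈ R₀, rename (Sum.inl : Fin n → Fin n ⊕ Fin n) w ∈ R := by
    intro w hw
    have : R = Ideal.map (rename (Sum.inl : Fin n → Fin n ⊕ Fin n)).toRingHom R₀ := by
      rw [hR₀, Ideal.map_span, ← Set.range_comp, hR]; rfl
    rw [this]
    exact Ideal.mem_map_of_mem _ hw
  refine le_antisymm ?_ ?_
  · exact sup_le (le_sup_of_le_left (le_sup_of_le_left le_sup_left))
      (le_sup_of_le_left le_sup_right)
  · have hS_le : S ≤ R ⊔ U := by
      rw [hS, Ideal.span_le]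
      rintro _ ⟨j, rfl⟩
      have hq : q j ∈ S₀ := by rw [hS₀]; exact Ideal.subset_span ⟨j, rfl⟩
      have h1 : aeval u (q j) ∈ R₀ := by
        rw [← Ideal.Quotient.eq_zero_iff_mem, key, Ideal.Quotient.eq_zero_iff_mem.mpr hq,
          map_zero]
      have heq : rename (Sum.inr : Fin n → Fin n ⊕ Fin n) (q j) =
          (rename (Sum.inr : Fin n → Fin n ⊕ Fin n) (q j) -
            rename (Sum.inl : Fin n → Fin n ⊕ Fin n) (aeval u (q j))) +
          rename (Sum.inl : Fin n → Fin n ⊕ Fin n) (aeval u (q j)) := by ring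
      show rename (Sum.inr : Fin n → Fin n ⊕ Fin n) (q j) ∈ R ⊔ U
      rw [heq]
      refine Ideal.add_mem _ (Ideal.mem_sup_right ?_) (Ideal.mem_sup_left (hRmap _ h1))
      rw [comm]; exact modU _
    have hV_le : V ≤ R ⊔ U := by
      rw [hV, Ideal.span_le]
      rintro _ ⟨i, rfl⟩
      have h1 : X i - aeval u (v i) ∈ R₀ := by
        rw [← Ideal.Quotient.eq_zero_iff_mem, map_sub, key, hv i, sub_self]
      have heq : X (Sum.inl i) - rename (Sum.inr : Fin n → Fin n ⊕ Fin n) (v i) =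
          rename (Sum.inl : Fin n → Fin n ⊕ Fin n) (X i - aeval u (v i)) +
          (rename (Sum.inl : Fin n → Fin n ⊕ Fin n) (aeval u (v i)) -
            rename (Sum.inr : Fin n → Fin n ⊕ Fin n) (v i)) := by
        rw [map_sub, rename_X]; ring
      show X (Sum.inl i) - rename (Sum.inr : Fin n → Fin n ⊕ Fin n) (v i) ∈ R ⊔ U
      rw [heq]
      refine Ideal.add_mem _ (Ideal.mem_sup_left (hRmap _ h1)) (Ideal.mem_sup_right ?_)
      have hm := modU (v i)
      rw [← comm] at hm
      have := U.neg_mem hm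
      simpa using this
    exact sup_le (sup_le (sup_le le_sup_left hS_le) le_sup_right) hV_le
end

section
/- Let p_1,…,p_m and q_1,…,q_k be polynomials in ℂ[x_1,…,x_n]. If the quotient algebras ℂ[x_1,…,x_n]/⟨p_1,…,p_m⟩ and ℂ[x_1,…,x_n]/⟨q_1,…,q_k⟩ are isomorphic as ℂ-algebras, then there exists a ℂ-algebra automorphism σ of the polynomial ring ℂ[x_1,…,x_{2n}] in 2n variables such that σ maps the ideal ⟨p_1,…,p_m, x_{n+1},…,x_{2n}⟩ onto the ideal ⟨q_1,…,q_k, x_{n+1},…,x_{2n}⟩ (where p_i and q_j are regarded as polynomials in the first n variables). -/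
/-!
Lift an isomorphism `φ : R[x]/I ≃ R[y]/J` and its inverse to polynomial maps `f` and `g`
(`φ x̄ = ḡ(y)`, `φ⁻¹ ȳ = f̄(x)`). In `R[x, y]` the ideals `⟨I(x), y - f(x)⟩` and `⟨J(y), x - g(y)⟩`
are both the kernel of `R[x, y] → R[y]/J`, `x ↦ φ x̄`, `y ↦ ȳ`. The triangular automorphisms
`y ↦ y - f(x)` and `x ↦ x - g(y)` carry `⟨I(x), y⟩` and `⟨J(y), x⟩` onto these two ideals.
-/

open MvPolynomial

lemma Ideal.map_algEquiv_trans {R A B C : Type*} [CommSemiring R] [Semiring A] [Semiring B]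
    [Semiring C] [Algebra R A] [Algebra R B] [Algebra R C] (e₁ : A ≃ₐ[R] B) (e₂ : B ≃ₐ[R] C)
    (I : Ideal A) : I.map (e₁.trans e₂) = (I.map e₁).map e₂ :=
  (Ideal.map_mapₐ (e₁ : A →ₐ[R] B) (e₂ : B →ₐ[R] C)).symm

namespace MvPolynomial

variable {R : Type*} [CommRing R] {σ τ : Type*}

/-- The ideal `⟨I(x), y - f(x)⟩` of `R[x, y]`; `graphIdeal I 0` is `⟨I(x), y⟩`. -/
noncomputable def graphIdeal (I : Ideal (MvPolynomial σ R)) (f : τ → MvPolynomial σ R) :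
    Ideal (MvPolynomial (σ ⊕ τ) R) :=
  I.map (rename Sum.inl) ⊔ Ideal.span (Set.range fun j => X (Sum.inr j) - rename Sum.inl (f j))

lemma aeval_sub_aeval_mem_span {S : Type*} [CommRing S] [Algebra R S] (u v : σ → S)
    (h : MvPolynomial σ R) :
    aeval u h - aeval v h ∈ Ideal.span (Set.range fun i => u i - v i) := by
  set K := Ideal.span (Set.range fun i => u i - v i)
  have huv : (Ideal.Quotient.mkₐ R K).comp (aeval u) = (Ideal.Quotient.mkₐ R K).comp (aeval v) :=
    algHom_ext fun i => by
      simpa [Ideal.Quotient.mk_eq_mk_iff_sub_mem] using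
        (Ideal.subset_span ⟨i, rfl⟩ : u i - v i ∈ K)
  exact (Ideal.Quotient.mk_eq_mk_iff_sub_mem _ _).1 (DFunLike.congr_fun huv h)

lemma sub_rename_inl_aeval_sumElim_mem_span (f : τ → MvPolynomial σ R)
    (h : MvPolynomial (σ ⊕ τ) R) :
    h - rename Sum.inl (aeval (Sum.elim X f) h) ∈
      Ideal.span (Set.range fun j => X (Sum.inr j) - rename Sum.inl (f j)) := by
  have hsub := aeval_sub_aeval_mem_span X (fun i => rename Sum.inl (Sum.elim X f i)) h
  rw [aeval_X_left_apply, ← comp_aeval_apply] at hsub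
  refine Ideal.span_le.2 ?_ hsub
  rintro _ ⟨i | j, rfl⟩
  · simp
  · exact Ideal.subset_span ⟨j, rfl⟩

theorem ker_aeval_sumElim {S : Type*} [CommRing S] [Algebra R S]
    (φ : MvPolynomial σ R →ₐ[R] S) (v : τ → S) (f : τ → MvPolynomial σ R)
    (hf : ∀ j, φ (f j) = v j) :
    RingHom.ker (aeval (Sum.elim (φ ∘ X) v)) = graphIdeal (RingHom.ker φ) f := by
  set Ψ := aeval (R := R) (Sum.elim (φ ∘ X) v)
  have hΨ (h : MvPolynomial σ R) : Ψ (rename Sum.inl h) = φ h := by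
    rw [← AlgHom.comp_apply]
    congr 1
    exact algHom_ext fun i => by simp [Ψ]
  apply le_antisymm
  · intro h hh
    set ρ := aeval (R := R) (Sum.elim X f)
    have hρ : φ.comp ρ = Ψ := algHom_ext fun i => by cases i <;> simp [Ψ, ρ, hf]
    have hρh : ρ h ∈ RingHom.ker φ := by
      rwa [RingHom.mem_ker, ← AlgHom.comp_apply, hρ]
    rw [← sub_add_cancel h (rename Sum.inl (ρ h))]
    exact add_mem (Ideal.mem_sup_right (sub_rename_inl_aeval_sumElim_mem_span f h))
      (Ideal.mem_sup_left (Ideal.mem_map_of_mem _ hρh))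
  · rw [graphIdeal, sup_le_iff, Ideal.map_le_iff_le_comap, Ideal.span_le]
    constructor
    · intro h hh
      simpa [RingHom.mem_ker, hΨ] using hh
    · rintro _ ⟨j, rfl⟩
      simp [RingHom.mem_ker, hΨ, Ψ, hf]

noncomputable def shearHom (f : τ → MvPolynomial σ R) :
    MvPolynomial (σ ⊕ τ) R →ₐ[R] MvPolynomial (σ ⊕ τ) R :=
  aeval (Sum.elim (X ∘ Sum.inl) fun j => X (Sum.inr j) - rename Sum.inl (f j))

@[simp] lemma shearHom_X_inl (f : τ → MvPolynomial σ R) (i : σ) :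
    shearHom f (X (Sum.inl i)) = X (Sum.inl i) := by
  simp [shearHom]

lemma shearHom_comp_rename_inl (f : τ → MvPolynomial σ R) :
    (shearHom f).comp (rename Sum.inl) = rename Sum.inl :=
  algHom_ext fun i => by simp

@[simp] lemma shearHom_rename_inl (f : τ → MvPolynomial σ R) (h : MvPolynomial σ R) :
    shearHom f (rename Sum.inl h) = rename Sum.inl h :=
  DFunLike.congr_fun (shearHom_comp_rename_inl f) h

@[simp] lemma shearHom_X_inr (f : τ → MvPolynomial σ R) (j : τ) :
    shearHom f (X (Sum.inr j)) = X (Sum.inr j) - rename Sum.inl (f j) := by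
  simp [shearHom]

lemma shearHom_comp_shearHom (f g : τ → MvPolynomial σ R) :
    (shearHom f).comp (shearHom g) = shearHom (f + g) := by
  refine algHom_ext ?_
  rintro (i | j)
  · simp [shearHom]
  · simp only [AlgHom.comp_apply, shearHom_X_inr, map_sub, shearHom_rename_inl, Pi.add_apply,
      map_add]
    ring

@[simp] lemma shearHom_zero : shearHom (0 : τ → MvPolynomial σ R) = AlgHom.id R _ := by
  refine algHom_ext ?_
  rintro (i | j) <;> simp [shearHom]

noncomputable def shear (f : τ → MvPolynomial σ R) :
    MvPolynomial (σ ⊕ τ) R ≃ₐ[R] MvPolynomial (σ ⊕ τ) R :=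
  AlgEquiv.ofAlgHom (shearHom f) (shearHom (-f))
    (by rw [shearHom_comp_shearHom, add_neg_cancel, shearHom_zero])
    (by rw [shearHom_comp_shearHom, neg_add_cancel, shearHom_zero])

lemma map_shear_graphIdeal (I : Ideal (MvPolynomial σ R)) (f g : τ → MvPolynomial σ R) :
    (graphIdeal I g).map (shear f) = graphIdeal I (g + f) := by
  change (graphIdeal I g).map (shearHom f) = _
  rw [graphIdeal, graphIdeal, Ideal.map_sup, Ideal.map_mapₐ, shearHom_comp_rename_inl,
    Ideal.map_span, ← Set.range_comp]
  congr 3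
  funext j
  simp only [Function.comp_apply, map_sub, shearHom_X_inr, shearHom_rename_inl, Pi.add_apply,
    map_add]
  ring

lemma map_renameEquiv_ker_aeval {α β S : Type*} [CommRing S] [Algebra R S] (e : α ≃ β)
    (v : α → S) :
    (RingHom.ker (aeval (R := R) v)).map (renameEquiv R e) =
      RingHom.ker (aeval (v ∘ e.symm)) := by
  refine (Ideal.map_comap_of_equiv (renameEquiv R e).toRingEquiv).trans ?_
  ext x
  simp [RingHom.mem_ker, aeval_rename]

theorem exists_algEquiv_map_graphIdeal_zero_of_surjective {S : Type*} [CommRing S] [Algebra R S]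
    (φ : MvPolynomial σ R →ₐ[R] S) (ψ : MvPolynomial τ R →ₐ[R] S)
    (hφ : Function.Surjective φ) (hψ : Function.Surjective ψ) :
    ∃ Θ : MvPolynomial (σ ⊕ τ) R ≃ₐ[R] MvPolynomial (τ ⊕ σ) R,
      (graphIdeal (RingHom.ker φ) (0 : τ → MvPolynomial σ R)).map Θ =
        graphIdeal (RingHom.ker ψ) (0 : σ → MvPolynomial τ R) := by
  choose f hf using fun j => hφ (ψ (X j))
  choose g hg using fun i => hψ (φ (X i))
  have hswap : (graphIdeal (RingHom.ker φ) f).map (renameEquiv R (Equiv.sumComm σ τ)) =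
      graphIdeal (RingHom.ker ψ) g := by
    have hcomm : Sum.elim (φ ∘ X) (ψ ∘ X) ∘ (Equiv.sumComm σ τ).symm =
        Sum.elim (ψ ∘ X) (φ ∘ X) := by
      funext x
      rcases x with j | i <;> rfl
    rw [← ker_aeval_sumElim φ (ψ ∘ X) f hf, map_renameEquiv_ker_aeval, hcomm,
      ← ker_aeval_sumElim ψ (φ ∘ X) g hg]
  refine ⟨(shear f).trans ((renameEquiv R (Equiv.sumComm σ τ)).trans (shear (-g))), ?_⟩
  rw [Ideal.map_algEquiv_trans, Ideal.map_algEquiv_trans, map_shear_graphIdeal, zero_add, hswap,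
    map_shear_graphIdeal, add_neg_cancel]

theorem exists_algEquiv_map_graphIdeal_zero_of_quotient {I : Ideal (MvPolynomial σ R)}
    {J : Ideal (MvPolynomial τ R)} (e : (MvPolynomial σ R ⧸ I) ≃ₐ[R] (MvPolynomial τ R ⧸ J)) :
    ∃ Θ : MvPolynomial (σ ⊕ τ) R ≃ₐ[R] MvPolynomial (τ ⊕ σ) R,
      (graphIdeal I (0 : τ → MvPolynomial σ R)).map Θ =
        graphIdeal J (0 : σ → MvPolynomial τ R) := by
  have hI : RingHom.ker (e.toAlgHom.comp (Ideal.Quotient.mkₐ R I)) = I := by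
    ext x
    simp [RingHom.mem_ker, Ideal.Quotient.eq_zero_iff_mem]
  have hJ : RingHom.ker (Ideal.Quotient.mkₐ R J) = J := by
    ext x
    simp [RingHom.mem_ker, Ideal.Quotient.eq_zero_iff_mem]
  obtain ⟨Θ, hΘ⟩ := exists_algEquiv_map_graphIdeal_zero_of_surjective
    (e.toAlgHom.comp (Ideal.Quotient.mkₐ R I)) (Ideal.Quotient.mkₐ R J)
    (e.surjective.comp (Ideal.Quotient.mkₐ_surjective R I)) (Ideal.Quotient.mkₐ_surjective R J)
  rw [hI, hJ] at hΘ
  exact ⟨Θ, hΘ⟩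

lemma graphIdeal_span_zero {ι : Type*} (p : ι → MvPolynomial σ R) :
    graphIdeal (Ideal.span (Set.range p)) (0 : τ → MvPolynomial σ R) =
      Ideal.span
        (Set.range (fun i => rename Sum.inl (p i)) ∪ Set.range fun j => X (Sum.inr j)) := by
  rw [graphIdeal, Ideal.map_span, Ideal.span_union, ← Set.range_comp]
  simp [Function.comp_def]

end MvPolynomial

/-- Corollary 1.2 (stable equivalence of isomorphic varieties, without tameness).
The polynomial ring `ℂ[x₁,…,x₂ₙ]` in `2n` variables is modelled as
`MvPolynomial (Fin n ⊕ Fin n) ℂ`, with the first `n` variables indexed by `Sum.inl`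
and the last `n` variables `x_{n+1},…,x_{2n}` indexed by `Sum.inr`. -/
theorem stable_equivalence (n m k : ℕ)
    (p : Fin m → MvPolynomial (Fin n) ℂ) (q : Fin k → MvPolynomial (Fin n) ℂ)
    (h : Nonempty ((MvPolynomial (Fin n) ℂ ⧸ Ideal.span (Set.range p)) ≃ₐ[ℂ]
        (MvPolynomial (Fin n) ℂ ⧸ Ideal.span (Set.range q)))) :
    ∃ σ : MvPolynomial (Fin n ⊕ Fin n) ℂ ≃ₐ[ℂ] MvPolynomial (Fin n ⊕ Fin n) ℂ,
      Ideal.map σ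
        (Ideal.span
          (Set.range (fun i => rename (Sum.inl : Fin n → Fin n ⊕ Fin n) (p i)) ∪
           Set.range (fun i : Fin n => (X (Sum.inr i) : MvPolynomial (Fin n ⊕ Fin n) ℂ)))) =
      Ideal.span
        (Set.range (fun i => rename (Sum.inl : Fin n → Fin n ⊕ Fin n) (q i)) ∪
         Set.range (fun i : Fin n => (X (Sum.inr i) : MvPolynomial (Fin n ⊕ Fin n) ℂ))) := by
  obtain ⟨φ⟩ := h
  obtain ⟨Θ, hΘ⟩ := exists_algEquiv_map_graphIdeal_zero_of_quotient φ
  rw [graphIdeal_span_zero, graphIdeal_span_zero] at hΘ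
  exact ⟨Θ, hΘ⟩
end

section
/- Let n ≥ 3, and in ℂ[x_1,…,x_n] set p = x_1 + x_2 + ⋯ + x_n − x_1x_2⋯x_n and q = x_1 + (x_2 + x_3 + ⋯ + x_n)·x_2x_3⋯x_{n−1} − x_1x_2⋯x_n. Then the quotient algebras ℂ[x_1,…,x_n]/⟨p⟩ and ℂ[x_1,…,x_n]/⟨q⟩ are isomorphic as ℂ-algebras. -/
open MvPolynomial

/-- The isomorphism part of Proposition 1.4.  Variables are indexed `0,…,n-1`, so
`x₁ = X 0`, `x₂ + ⋯ + xₙ` is the sum over indices with `0 < i`, and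
`x₂⋯x_{n-1}` is the product over indices `i` with `0 < i` and `i < n - 1`. -/
theorem prop_1_4_isomorphism (n : ℕ) (hn : 3 ≤ n)
    (p q : MvPolynomial (Fin n) ℂ)
    (hp : p = (∑ i, X i) - ∏ i, X i)
    (hq : q = X (⟨0, by omega⟩ : Fin n)
        + (∑ i ∈ Finset.univ.filter (fun i : Fin n => 0 < i.val), X i)
          * (∏ i ∈ Finset.univ.filter (fun i : Fin n => 0 < i.val ∧ i.val < n - 1), X i)
        - ∏ i, X i) :
    Nonempty ((MvPolynomial (Fin n) ℂ ⧸ Ideal.span {p}) ≃ₐ[ℂ]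
      (MvPolynomial (Fin n) ℂ ⧸ Ideal.span {q})) := by
  have h0 : (0 : ℕ) < n := by omega
  have hL : n - 1 < n := by omega
  set i0 : Fin n := ⟨0, h0⟩ with hi0def
  set L : Fin n := ⟨n - 1, hL⟩ with hLdef
  have hLne : L ≠ i0 := by
    simp [hi0def, hLdef, Fin.ext_iff]; omega
  set S : MvPolynomial (Fin n) ℂ :=
    ∑ i ∈ Finset.univ.filter (fun i : Fin n => 0 < i.val), X i with hSdef
  set M : MvPolynomial (Fin n) ℂ :=
    ∏ i ∈ Finset.univ.filter (fun i : Fin n => 0 < i.val ∧ i.val < n - 1), X i with hMdef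
  -- rewrite hq with i0
  have hq' : q = X i0 + S * M - ∏ i, X i := hq
  -- set partition facts
  have e1 : Finset.univ.filter (fun i : Fin n => ¬ 0 < i.val) = {i0} := by
    ext i
    simp [hi0def, Fin.ext_iff]
  have e2 : Finset.univ.filter (fun i : Fin n => 0 < i.val)
      = insert L (Finset.univ.filter (fun i : Fin n => 0 < i.val ∧ i.val < n - 1)) := by
    ext i
    simp only [Finset.mem_filter, Finset.mem_univ, true_and, Finset.mem_insert, hLdef,
      Fin.ext_iff]
    have := i.isLt
    omega
  have e3 : L ∉ Finset.univ.filter (fun i : Fin n => 0 < i.val ∧ i.val < n - 1) := by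
    simp [hLdef]
  -- generic splits
  have hsplit_prod : ∀ h : Fin n → MvPolynomial (Fin n) ℂ,
      ∏ i, h i = h i0 * (h L *
        ∏ i ∈ Finset.univ.filter (fun i : Fin n => 0 < i.val ∧ i.val < n - 1), h i) := by
    intro h
    rw [← Finset.prod_filter_mul_prod_filter_not Finset.univ (fun i : Fin n => 0 < i.val) h,
      e1, e2, Finset.prod_insert e3, Finset.prod_singleton, mul_comm]
  have hsplit_sum : ∑ i, (X i : MvPolynomial (Fin n) ℂ) = X i0 + S := by
    rw [← Finset.sum_filter_add_sum_filter_not Finset.univ (fun i : Fin n => 0 < i.val) X,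
      e1, Finset.sum_singleton, add_comm, hSdef]
  -- the substitutions
  set f : Fin n → MvPolynomial (Fin n) ℂ := fun i => if i = i0 then X i0 * M else X i with hfdef
  set g : Fin n → MvPolynomial (Fin n) ℂ :=
    fun i => if i = i0 then X i0 * X L - S else X i with hgdef
  have hfi0 : f i0 = X i0 * M := by simp [hfdef]
  have hgi0 : g i0 = X i0 * X L - S := by simp [hgdef]
  have hfne : ∀ i : Fin n, i ≠ i0 → f i = X i := by intro i hi; simp [hfdef, hi]
  have hgne : ∀ i : Fin n, i ≠ i0 → g i = X i := by intro i hi; simp [hgdef, hi]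
  -- aeval fixes S and M
  have hmid_ne : ∀ i ∈ Finset.univ.filter (fun i : Fin n => 0 < i.val ∧ i.val < n - 1),
      i ≠ i0 := by
    intro i hi; simp only [Finset.mem_filter] at hi
    simp [hi0def, Fin.ext_iff]; omega
  have hpos_ne : ∀ i ∈ Finset.univ.filter (fun i : Fin n => 0 < i.val), i ≠ i0 := by
    intro i hi; simp only [Finset.mem_filter] at hi
    simp [hi0def, Fin.ext_iff]; omega
  have haevalS : ∀ u : Fin n → MvPolynomial (Fin n) ℂ,
      (∀ i : Fin n, i ≠ i0 → u i = X i) → aeval u S = S := by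
    intro u hu
    rw [hSdef, map_sum]
    exact Finset.sum_congr rfl fun i hi => by rw [aeval_X, hu i (hpos_ne i hi)]
  have haevalM : ∀ u : Fin n → MvPolynomial (Fin n) ℂ,
      (∀ i : Fin n, i ≠ i0 → u i = X i) → aeval u M = M := by
    intro u hu
    rw [hMdef, map_prod]
    exact Finset.prod_congr rfl fun i hi => by rw [aeval_X, hu i (hmid_ne i hi)]
  have haevalP : ∀ u : Fin n → MvPolynomial (Fin n) ℂ,
      aeval u (∏ i, X i : MvPolynomial (Fin n) ℂ) = ∏ i, u i := by
    intro u; rw [map_prod]; simp [aeval_X]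
  -- products of f and g
  have hmidf : ∏ i ∈ Finset.univ.filter (fun i : Fin n => 0 < i.val ∧ i.val < n - 1), f i
      = M := by
    rw [hMdef]; exact Finset.prod_congr rfl fun i hi => hfne i (hmid_ne i hi)
  have hmidg : ∏ i ∈ Finset.univ.filter (fun i : Fin n => 0 < i.val ∧ i.val < n - 1), g i
      = M := by
    rw [hMdef]; exact Finset.prod_congr rfl fun i hi => hgne i (hmid_ne i hi)
  have hprodX : ∏ i, (X i : MvPolynomial (Fin n) ℂ) = X i0 * (X L * M) := hsplit_prod X
  have hprodf : ∏ i, f i = (X i0 * M) * (X L * M) := by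
    rw [hsplit_prod f, hfi0, hfne L hLne, hmidf]
  have hprodg : ∏ i, g i = (X i0 * X L - S) * (X L * M) := by
    rw [hsplit_prod g, hgi0, hgne L hLne, hmidg]
  -- the four key computations
  have hfq : aeval f q = M * p := by
    rw [hq', hp, map_sub, map_add, map_mul, aeval_X, hfi0,
      haevalS f hfne, haevalM f hfne, haevalP f, hprodf, hsplit_sum, hprodX]
    ring
  have hgp : aeval g p = X L * q := by
    rw [hp, hq', map_sub, hsplit_sum, map_add, aeval_X, hgi0,
      haevalS g hgne, haevalP g, hprodg, hprodX]
    ring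
  have hfg0 : aeval f (g i0) = X i0 - p := by
    rw [hgi0, map_sub, map_mul, aeval_X, aeval_X, hfi0, hfne L hLne,
      haevalS f hfne, hp, hsplit_sum, hprodX]
    ring
  have hgf0 : aeval g (f i0) = X i0 - q := by
    rw [hfi0, map_mul, aeval_X, hgi0, haevalM g hgne, hq', hprodX]
    ring
  -- the algebra maps
  set Ip : Ideal (MvPolynomial (Fin n) ℂ) := Ideal.span {p} with hIp
  set Iq : Ideal (MvPolynomial (Fin n) ℂ) := Ideal.span {q} with hIq
  set F : MvPolynomial (Fin n) ℂ →ₐ[ℂ] MvPolynomial (Fin n) ℂ ⧸ Ip :=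
    (Ideal.Quotient.mkₐ ℂ Ip).comp (aeval f) with hF
  set G : MvPolynomial (Fin n) ℂ →ₐ[ℂ] MvPolynomial (Fin n) ℂ ⧸ Iq :=
    (Ideal.Quotient.mkₐ ℂ Iq).comp (aeval g) with hG
  have hFz : ∀ a ∈ Iq, F a = 0 := by
    intro a ha
    rw [hIq, Ideal.mem_span_singleton] at ha
    obtain ⟨c, rfl⟩ := ha
    have h1 : F q = 0 := by
      show Ideal.Quotient.mk Ip (aeval f q) = 0
      rw [hfq, Ideal.Quotient.eq_zero_iff_mem]
      exact Ideal.mem_span_singleton.2 (dvd_mul_left p M)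
    rw [map_mul, h1, zero_mul]
  have hGz : ∀ a ∈ Ip, G a = 0 := by
    intro a ha
    rw [hIp, Ideal.mem_span_singleton] at ha
    obtain ⟨c, rfl⟩ := ha
    have h1 : G p = 0 := by
      show Ideal.Quotient.mk Iq (aeval g p) = 0
      rw [hgp, Ideal.Quotient.eq_zero_iff_mem]
      exact Ideal.mem_span_singleton.2 (dvd_mul_left q (X L))
    rw [map_mul, h1, zero_mul]
  set φ := Ideal.Quotient.liftₐ Iq F hFz with hφ
  set ψ := Ideal.Quotient.liftₐ Ip G hGz with hψ
  have hφmk : ∀ x, φ (Ideal.Quotient.mk Iq x) = Ideal.Quotient.mk Ip (aeval f x) := by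
    intro x; rfl
  have hψmk : ∀ x, ψ (Ideal.Quotient.mk Ip x) = Ideal.Quotient.mk Iq (aeval g x) := by
    intro x; rfl
  refine ⟨AlgEquiv.ofAlgHom ψ φ ?_ ?_⟩
  · apply Ideal.Quotient.algHom_ext
    apply MvPolynomial.algHom_ext
    intro i
    simp only [AlgHom.comp_apply, Ideal.Quotient.mkₐ_eq_mk, AlgHom.id_apply]
    rw [hφmk, hψmk, aeval_X]
    by_cases hi : i = i0
    · subst hi
      rw [show aeval g (f i0) = X i0 - q from hgf0]
      rw [Ideal.Quotient.eq]
      have : X i0 - q - X i0 = -q := by ring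
      rw [this]
      exact neg_mem (Ideal.subset_span rfl)
    · rw [hfne i hi, aeval_X, hgne i hi]
  · apply Ideal.Quotient.algHom_ext
    apply MvPolynomial.algHom_ext
    intro i
    simp only [AlgHom.comp_apply, Ideal.Quotient.mkₐ_eq_mk, AlgHom.id_apply]
    rw [hψmk, hφmk, aeval_X]
    by_cases hi : i = i0
    · subst hi
      rw [show aeval f (g i0) = X i0 - p from hfg0]
      rw [Ideal.Quotient.eq]
      have : X i0 - p - X i0 = -p := by ring
      rw [this]
      exact neg_mem (Ideal.subset_span rfl)
    · rw [hgne i hi, aeval_X, hfne i hi]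
end

section
/- Let n ≥ 3 and in ℂ[x_1,…,x_n] set p = x_1 + x_2 + ⋯ + x_n − x_1x_2⋯x_n. Then the set of points a ∈ ℂ^n at which all partial derivatives ∂p/∂x_i vanish is exactly the set of constant tuples (ζ, ζ, …, ζ) with ζ^{n−1} = 1; in particular, grad(p) has exactly n−1 common zeros. -/
open MvPolynomial

section PDeriv

variable {R σ : Type*} [CommSemiring R] {i : σ} {s : Finset σ}

lemma pderiv_prod_X_of_notMem (hi : i ∉ s) :
    pderiv i (∏ j ∈ s, X j : MvPolynomial σ R) = 0 := by
  classical
  induction s using Finset.induction with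
  | empty => simp
  | insert j s hj ih =>
    rw [Finset.prod_insert hj, pderiv_mul, pderiv_X_of_ne (ne_of_mem_of_not_mem
      (Finset.mem_insert_self j s) hi), ih (fun h => hi (Finset.mem_insert_of_mem h))]
    ring

lemma pderiv_prod_X_of_mem [DecidableEq σ] (hi : i ∈ s) :
    pderiv i (∏ j ∈ s, X j : MvPolynomial σ R) = ∏ j ∈ s.erase i, X j := by
  rw [← Finset.mul_prod_erase s _ hi, pderiv_mul, pderiv_X_self,
    pderiv_prod_X_of_notMem (Finset.notMem_erase i s), one_mul, mul_zero, add_zero]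

lemma pderiv_sum_X [Fintype σ] : pderiv i (∑ j, X j : MvPolynomial σ R) = 1 := by
  rw [map_sum, Finset.sum_eq_single i (fun j _ hj => pderiv_X_of_ne hj) (by simp),
    pderiv_X_self]

end PDeriv

lemma eval_pderiv_sum_X_sub_prod_X {R σ : Type*} [CommRing R] [Fintype σ] [DecidableEq σ]
    (a : σ → R) (i : σ) :
    eval a (pderiv i (∑ j, X j - ∏ j, X j : MvPolynomial σ R))
      = 1 - ∏ j ∈ Finset.univ.erase i, a j := by
  rw [map_sub, pderiv_sum_X, pderiv_prod_X_of_mem (Finset.mem_univ i)]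
  simp

/-- Each `a i` equals the full product `a i * ∏_{j ≠ i} a j`, so the tuple is constant. -/
lemma forall_prod_erase_eq_one_iff {M σ : Type*} [CommMonoid M] [Fintype σ] [DecidableEq σ]
    (a : σ → M) :
    (∀ i, ∏ j ∈ Finset.univ.erase i, a j = 1)
      ↔ ∃ ζ : M, ζ ^ (Fintype.card σ - 1) = 1 ∧ a = fun _ => ζ := by
  have prod_erase_const (ζ : M) (i : σ) :
      ∏ _j ∈ Finset.univ.erase i, ζ = ζ ^ (Fintype.card σ - 1) := by
    rw [Finset.prod_const, Finset.card_erase_of_mem (Finset.mem_univ i), Finset.card_univ]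
  constructor
  · intro h
    have hconst : a = fun _ => ∏ j, a j := by
      funext i
      rw [← Finset.mul_prod_erase _ _ (Finset.mem_univ i), h i, mul_one]
    refine ⟨∏ j, a j, ?_, hconst⟩
    rcases isEmpty_or_nonempty σ with _ | ⟨⟨i⟩⟩
    · simp
    · rw [← prod_erase_const _ i, ← h i]
      exact Finset.prod_congr rfl fun j _ => (congrFun hconst j).symm
  · rintro ⟨ζ, hζ, rfl⟩ i
    rw [prod_erase_const, hζ]

lemma ncard_setOf_eq_const {α σ : Type*} [Nonempty σ] (P : α → Prop) :
    {a : σ → α | ∃ ζ, P ζ ∧ a = fun _ => ζ}.ncard = {ζ | P ζ}.ncard := by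
  have himage : {a : σ → α | ∃ ζ, P ζ ∧ a = fun _ => ζ} = Function.const σ '' {ζ | P ζ} := by
    ext a
    exact exists_congr fun ζ => and_congr_right' eq_comm
  rw [himage, Set.ncard_image_of_injective _ Function.const_injective]

lemma Complex.ncard_setOf_pow_eq_one {m : ℕ} (hm : m ≠ 0) :
    {ζ : ℂ | ζ ^ m = 1}.ncard = m := by
  have hroots : {ζ : ℂ | ζ ^ m = 1} = ↑(Polynomial.nthRootsFinset m (1 : ℂ)) := by
    ext ζ
    simp [Polynomial.mem_nthRootsFinset (Nat.pos_of_ne_zero hm)]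
  rw [hroots, Set.ncard_coe_finset, (Complex.isPrimitiveRoot_exp m hm).card_nthRootsFinset]

/-- The gradient computation for `p = x₁ + ⋯ + xₙ - x₁⋯xₙ` in the proof of
Proposition 1.4: the common zeros of `grad p` are exactly the constant tuples
`(ζ,…,ζ)` with `ζ^(n-1) = 1`; in particular there are exactly `n - 1` of them. -/
theorem prop_1_4_gradient_p (n : ℕ) (hn : 3 ≤ n)
    (p : MvPolynomial (Fin n) ℂ)
    (hp : p = (∑ i, X i) - ∏ i, X i) :
    ({a : Fin n → ℂ | ∀ i, eval a (pderiv i p) = 0}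
      = {a : Fin n → ℂ | ∃ ζ : ℂ, ζ ^ (n - 1) = 1 ∧ a = fun _ => ζ}) ∧
    {a : Fin n → ℂ | ∀ i, eval a (pderiv i p) = 0}.ncard = n - 1 := by
  have hzeros : {a : Fin n → ℂ | ∀ i, eval a (pderiv i p) = 0}
      = {a : Fin n → ℂ | ∃ ζ : ℂ, ζ ^ (n - 1) = 1 ∧ a = fun _ => ζ} := by
    ext a
    simp only [Set.mem_ofPred_eq, hp, eval_pderiv_sum_X_sub_prod_X, sub_eq_zero]
    simp_rw [eq_comm (a := (1 : ℂ))]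
    simpa using forall_prod_erase_eq_one_iff a
  have : Nonempty (Fin n) := ⟨⟨0, by omega⟩⟩
  refine ⟨hzeros, ?_⟩
  rw [hzeros, ncard_setOf_eq_const, Complex.ncard_setOf_pow_eq_one (by omega)]
end

section
/- In ℂ[x,y,z], set p = x²z − y³z² − 3y²z + 2x − 3y − 1, Q = (1/2)y³z² + (3/2)y²z − (1/2)xz + (3/2)y + 1/2, and q = x − Q². Then the quotient algebras ℂ[x,y,z]/⟨p⟩ and ℂ[x,y,z]/⟨q⟩ are isomorphic as ℂ-algebras. -/
/-!
Substituting `x ↦ Q` and `x ↦ x²` (fixing `y`, `z`) gives algebra maps between the two quotients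
which are mutually inverse, by two identities valid whenever `2` is invertible:
`Q(x², y, z) = x - p/2` and `p(Q, y, z) = -z (x - Q²)`. The first shows that `x ↦ x²` sends `q`
into `⟨p⟩` and that `x ↦ Q ↦ Q(x², y, z)` is the identity modulo `p`; the second shows that
`x ↦ Q` sends `p` into `⟨q⟩`, and `x ↦ x² ↦ Q²` is the identity modulo `q` by definition of `q`.
-/

open MvPolynomial

namespace Ideal

variable {R A B : Type*} [CommSemiring R] [CommRing A] [CommRing B] [Algebra R A] [Algebra R B]

noncomputable def quotientAlgEquivOfInverseMod (I : Ideal A) (J : Ideal B)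
    (f : A →ₐ[R] B) (g : B →ₐ[R] A) (hf : I ≤ J.comap f) (hg : J ≤ I.comap g)
    (hgf : (Quotient.mkₐ R I).comp (g.comp f) = Quotient.mkₐ R I)
    (hfg : (Quotient.mkₐ R J).comp (f.comp g) = Quotient.mkₐ R J) :
    (A ⧸ I) ≃ₐ[R] (B ⧸ J) :=
  AlgEquiv.ofAlgHom (quotientMapₐ J f hf) (quotientMapₐ I g hg)
    (Quotient.algHom_ext R <| by
      rw [AlgHom.comp_assoc, quotient_map_comp_mkₐ, ← AlgHom.comp_assoc, quotient_map_comp_mkₐ,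
        AlgHom.comp_assoc, hfg, AlgHom.id_comp])
    (Quotient.algHom_ext R <| by
      rw [AlgHom.comp_assoc, quotient_map_comp_mkₐ, ← AlgHom.comp_assoc, quotient_map_comp_mkₐ,
        AlgHom.comp_assoc, hgf, AlgHom.id_comp])

end Ideal

section TomDieckPetrie

variable {R : Type*} [CommRing R]

def tomDieckPetrieP (x y z : R) : R :=
  x ^ 2 * z - y ^ 3 * z ^ 2 - 3 * y ^ 2 * z + 2 * x - 3 * y - 1

def tomDieckPetrieQ (half x y z : R) : R :=
  half * y ^ 3 * z ^ 2 + 3 * half * y ^ 2 * z - half * x * z + 3 * half * y + half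

theorem map_tomDieckPetrieP {S F : Type*} [CommRing S] [FunLike F R S] [RingHomClass F R S]
    (f : F) (x y z : R) :
    f (tomDieckPetrieP x y z) = tomDieckPetrieP (f x) (f y) (f z) := by
  simp only [tomDieckPetrieP, map_sub, map_add, map_mul, map_pow, map_one, map_ofNat]

theorem map_tomDieckPetrieQ {S F : Type*} [CommRing S] [FunLike F R S] [RingHomClass F R S]
    (f : F) (half x y z : R) :
    f (tomDieckPetrieQ half x y z) = tomDieckPetrieQ (f half) (f x) (f y) (f z) := by
  simp only [tomDieckPetrieQ, map_sub, map_add, map_mul, map_pow, map_ofNat]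

section Identities

variable {half : R} (h2 : 2 * half = 1) (x y z : R)
include h2

theorem tomDieckPetrieQ_sq_left :
    tomDieckPetrieQ half (x ^ 2) y z = x - half * tomDieckPetrieP x y z := by
  unfold tomDieckPetrieQ tomDieckPetrieP
  linear_combination x * h2

theorem tomDieckPetrieP_tomDieckPetrieQ_left :
    tomDieckPetrieP (tomDieckPetrieQ half x y z) y z =
      -z * (x - tomDieckPetrieQ half x y z ^ 2) := by
  unfold tomDieckPetrieQ tomDieckPetrieP
  linear_combination (1 + 3 * y + 3 * y ^ 2 * z + y ^ 3 * z ^ 2 - x * z) * h2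

end Identities

noncomputable def tomDieckPetrieQuotientAlgEquiv {half : R} (h2 : 2 * half = 1) :
    (MvPolynomial (Fin 3) R ⧸
        Ideal.span {(tomDieckPetrieP (X 0) (X 1) (X 2) : MvPolynomial (Fin 3) R)}) ≃ₐ[R]
      (MvPolynomial (Fin 3) R ⧸ Ideal.span
        {(X 0 - tomDieckPetrieQ (C half) (X 0) (X 1) (X 2) ^ 2 : MvPolynomial (Fin 3) R)}) := by
  set p : MvPolynomial (Fin 3) R := tomDieckPetrieP (X 0) (X 1) (X 2)
  set Q : MvPolynomial (Fin 3) R := tomDieckPetrieQ (C half) (X 0) (X 1) (X 2)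
  have hC2 : 2 * C half = (1 : MvPolynomial (Fin 3) R) := by
    rw [← map_ofNat C 2, ← map_mul, h2, map_one]
  set σ : MvPolynomial (Fin 3) R →ₐ[R] MvPolynomial (Fin 3) R := aeval ![X 0 ^ 2, X 1, X 2]
  set τ : MvPolynomial (Fin 3) R →ₐ[R] MvPolynomial (Fin 3) R := aeval ![Q, X 1, X 2]
  have σ_X0 : σ (X 0) = X 0 ^ 2 := aeval_X _ _
  have σ_X1 : σ (X 1) = X 1 := aeval_X _ _
  have σ_X2 : σ (X 2) = X 2 := aeval_X _ _
  have τ_X0 : τ (X 0) = Q := aeval_X _ _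
  have τ_X1 : τ (X 1) = X 1 := aeval_X _ _
  have τ_X2 : τ (X 2) = X 2 := aeval_X _ _
  have σ_Q : σ Q = X 0 - C half * p := by
    rw [map_tomDieckPetrieQ, σ_X0, σ_X1, σ_X2, show σ (C half) = C half from aeval_C _ _]
    exact tomDieckPetrieQ_sq_left hC2 _ _ _
  have τ_p : τ p = -X 2 * (X 0 - Q ^ 2) := by
    rw [map_tomDieckPetrieP, τ_X0, τ_X1, τ_X2]
    exact tomDieckPetrieP_tomDieckPetrieQ_left hC2 _ _ _
  refine Ideal.quotientAlgEquivOfInverseMod _ _ τ σ ?_ ?_ ?_ ?_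
  · rw [Ideal.span_singleton_le_iff_mem, Ideal.mem_comap, Ideal.mem_span_singleton, τ_p]
    exact dvd_mul_left _ _
  · rw [Ideal.span_singleton_le_iff_mem, Ideal.mem_comap, Ideal.mem_span_singleton, map_sub,
      map_pow, σ_X0, σ_Q]
    exact ⟨X 0 - C half ^ 2 * p, by linear_combination (X 0 * p) * hC2⟩
  all_goals
    refine algHom_ext fun i ↦ ?_
    fin_cases i <;> simp only [AlgHom.comp_apply, Ideal.Quotient.mkₐ_eq_mk, Fin.zero_eta,
      Fin.mk_one, Fin.reduceFinMk, Ideal.Quotient.mk_eq_mk_iff_sub_mem, Ideal.mem_span_singleton,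
      σ_X0, σ_X1, σ_X2, τ_X0, τ_X1, τ_X2, σ_Q]
  · exact ⟨-C half, by ring⟩
  · rw [map_pow, τ_X0]
    exact ⟨-1, by ring⟩

end TomDieckPetrie

/-- The isomorphism part of Proposition 3.1 for the tom Dieck–Petrie hypersurface.
In `ℂ[x,y,z] = MvPolynomial (Fin 3) ℂ` with `x = X 0`, `y = X 1`, `z = X 2`:
`ℂ[x,y,z]/⟨p⟩ ≅ ℂ[x,y,z]/⟨q⟩` where `p = x²z - y³z² - 3y²z + 2x - 3y - 1` and
`q = x - Q²` with `Q = (1/2)y³z² + (3/2)y²z - (1/2)xz + (3/2)y + 1/2`. -/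
theorem tomDieckPetrie_isomorphism
    (p Q q : MvPolynomial (Fin 3) ℂ)
    (hp : p = X 0 ^ 2 * X 2 - X 1 ^ 3 * X 2 ^ 2 - 3 * X 1 ^ 2 * X 2 + 2 * X 0 - 3 * X 1 - 1)
    (hQ : Q = C (1/2 : ℂ) * X 1 ^ 3 * X 2 ^ 2 + C (3/2 : ℂ) * X 1 ^ 2 * X 2
        - C (1/2 : ℂ) * X 0 * X 2 + C (3/2 : ℂ) * X 1 + C (1/2 : ℂ))
    (hq : q = X 0 - Q ^ 2) :
    Nonempty ((MvPolynomial (Fin 3) ℂ ⧸ Ideal.span {p}) ≃ₐ[ℂ]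
      (MvPolynomial (Fin 3) ℂ ⧸ Ideal.span {q})) := by
  replace hp : p = tomDieckPetrieP (X 0) (X 1) (X 2) := hp
  replace hQ : Q = tomDieckPetrieQ (C (1 / 2)) (X 0) (X 1) (X 2) := by
    rw [hQ, tomDieckPetrieQ, ← map_ofNat C 3, ← map_mul]
    norm_num
  subst hp hQ hq
  exact ⟨tomDieckPetrieQuotientAlgEquiv (by norm_num : 2 * (1 / 2 : ℂ) = 1)⟩
end

section
/- In ℂ[x,y,z], set p = x²z − y³z² − 3y²z + 2x − 3y − 1, Q = (1/2)y³z² + (3/2)y²z − (1/2)xz + (3/2)y + 1/2, and q = x − Q². Then: (a) the set of points of ℂ³ at which all three partial derivatives of p vanish equals the common zero set of x − y and xz + 1, and in particular is infinite; and (b) there is no point of ℂ³ at which all three partial derivatives of q vanish. -/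
open MvPolynomial

/-- The gradient computation in the proof of Proposition 3.1 for the tom Dieck–Petrie
hypersurface (`x = X 0`, `y = X 1`, `z = X 2`): (a) the common zeros of `grad p` form
exactly the common zero set of `x - y` and `xz + 1`, which is infinite; (b) `grad q`
vanishes nowhere. -/
theorem tomDieckPetrie_gradients
    (p Q q : MvPolynomial (Fin 3) ℂ)
    (hp : p = X 0 ^ 2 * X 2 - X 1 ^ 3 * X 2 ^ 2 - 3 * X 1 ^ 2 * X 2 + 2 * X 0 - 3 * X 1 - 1)
    (hQ : Q = C (1/2 : ℂ) * X 1 ^ 3 * X 2 ^ 2 + C (3/2 : ℂ) * X 1 ^ 2 * X 2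
        - C (1/2 : ℂ) * X 0 * X 2 + C (3/2 : ℂ) * X 1 + C (1/2 : ℂ))
    (hq : q = X 0 - Q ^ 2) :
    ({a : Fin 3 → ℂ | ∀ i, eval a (pderiv i p) = 0}
        = {a : Fin 3 → ℂ | a 0 - a 1 = 0 ∧ a 0 * a 2 + 1 = 0}) ∧
    {a : Fin 3 → ℂ | ∀ i, eval a (pderiv i p) = 0}.Infinite ∧
    ¬ ∃ a : Fin 3 → ℂ, ∀ i, eval a (pderiv i q) = 0 := by
  have h3 : (3 : MvPolynomial (Fin 3) ℂ) = C 3 := (map_ofNat C 3).symm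
  have h2 : (2 : MvPolynomial (Fin 3) ℂ) = C 2 := (map_ofNat C 2).symm
  subst hq hQ hp
  -- partial derivatives of p
  have e0 : ∀ a : Fin 3 → ℂ, eval a (pderiv 0
      (X 0 ^ 2 * X 2 - X 1 ^ 3 * X 2 ^ 2 - 3 * X 1 ^ 2 * X 2 + 2 * X 0 - 3 * X 1 - 1 :
        MvPolynomial (Fin 3) ℂ)) = 2 * a 0 * a 2 + 2 := by
    intro a; simp [h2, h3, pderiv_X, Pi.single_apply]; ring
  have e1 : ∀ a : Fin 3 → ℂ, eval a (pderiv 1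
      (X 0 ^ 2 * X 2 - X 1 ^ 3 * X 2 ^ 2 - 3 * X 1 ^ 2 * X 2 + 2 * X 0 - 3 * X 1 - 1 :
        MvPolynomial (Fin 3) ℂ)) = -3 * (a 1 * a 2 + 1) ^ 2 := by
    intro a; simp [h2, h3, pderiv_X, Pi.single_apply]; ring
  have e2 : ∀ a : Fin 3 → ℂ, eval a (pderiv 2
      (X 0 ^ 2 * X 2 - X 1 ^ 3 * X 2 ^ 2 - 3 * X 1 ^ 2 * X 2 + 2 * X 0 - 3 * X 1 - 1 :
        MvPolynomial (Fin 3) ℂ)) = a 0 ^ 2 - 2 * a 1 ^ 3 * a 2 - 3 * a 1 ^ 2 := by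
    intro a; simp [h2, h3, pderiv_X, Pi.single_apply]; ring
  have hset : {a : Fin 3 → ℂ | ∀ i, eval a (pderiv i
        (X 0 ^ 2 * X 2 - X 1 ^ 3 * X 2 ^ 2 - 3 * X 1 ^ 2 * X 2 + 2 * X 0 - 3 * X 1 - 1 :
          MvPolynomial (Fin 3) ℂ)) = 0}
      = {a : Fin 3 → ℂ | a 0 - a 1 = 0 ∧ a 0 * a 2 + 1 = 0} := by
    ext a
    simp only [Set.mem_setOf_eq]
    constructor
    · intro h
      have g0 := (e0 a) ▸ h 0
      have g1 := (e1 a) ▸ h 1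
      have hyz : a 1 * a 2 + 1 = 0 := by
        have : (a 1 * a 2 + 1) ^ 2 = 0 := by linear_combination (-1/3 : ℂ) * g1
        exact pow_eq_zero_iff (two_ne_zero) |>.mp this
      have hz : a 2 ≠ 0 := by
        intro hz
        have : (1 : ℂ) = 0 := by linear_combination hyz - a 1 * hz
        exact one_ne_zero this
      refine ⟨?_, by linear_combination (1/2 : ℂ) * g0⟩
      have : (a 0 - a 1) * a 2 = 0 := by linear_combination (1/2 : ℂ) * g0 - hyz
      rcases mul_eq_zero.mp this with h | h
      · exact h
      · exact absurd h hz
    · rintro ⟨h01, h02⟩ i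
      have hyz : a 1 * a 2 + 1 = 0 := by linear_combination h02 - a 2 * h01
      fin_cases i
      · exact (e0 a).trans (by linear_combination 2 * h02)
      · exact (e1 a).trans (by linear_combination (-3 * (a 1 * a 2 + 1)) * hyz)
      · exact (e2 a).trans (by
          linear_combination (a 0 + a 1) * h01 - 2 * a 1 ^ 2 * hyz)
  refine ⟨hset, ?_, ?_⟩
  · rw [hset]
    refine Set.infinite_of_injective_forall_mem
      (f := fun n : ℕ => ![((n : ℂ) + 1)⁻¹, ((n : ℂ) + 1)⁻¹, -((n : ℂ) + 1)]) ?_ ?_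
    · intro m n hmn
      have := congrFun hmn 2
      simp only [Matrix.cons_val_two, Matrix.tail_cons, Matrix.head_cons, neg_inj] at this
      exact_mod_cast (add_left_injective 1 this)
    · intro n
      have hn : ((n : ℂ) + 1) ≠ 0 := by
        have := Nat.cast_add_one_ne_zero (R := ℂ) n
        push_cast at this
        exact this
      constructor
      · simp
      · show ((n : ℂ) + 1)⁻¹ * -((n : ℂ) + 1) + 1 = 0
        field_simp
        ring
  · rintro ⟨a, h⟩
    -- abbreviate Q evaluated at a
    set u : ℂ := (1/2) * a 1 ^ 3 * a 2 ^ 2 + (3/2) * a 1 ^ 2 * a 2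
        - (1/2) * a 0 * a 2 + (3/2) * a 1 + 1/2 with hu
    set Qp : MvPolynomial (Fin 3) ℂ := C (1/2 : ℂ) * X 1 ^ 3 * X 2 ^ 2 + C (3/2 : ℂ) * X 1 ^ 2 * X 2
        - C (1/2 : ℂ) * X 0 * X 2 + C (3/2 : ℂ) * X 1 + C (1/2 : ℂ) with hQp
    have hev : ∀ (i : Fin 3), eval a (pderiv i (X 0 - Qp ^ 2))
        = eval a (pderiv i (X 0)) - 2 * eval a Qp * eval a (pderiv i Qp) := by
      intro i
      rw [map_sub, pow_two, Derivation.leibniz]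
      simp only [smul_eq_mul, map_add, map_mul, map_sub]
      ring
    have hQu : eval a Qp = u := by rw [hQp, hu]; simp
    have d0 : eval a (pderiv 0 Qp) = -(1/2) * a 2 := by
      rw [hQp]; simp [pderiv_X, Pi.single_apply]; ring
    have d1 : eval a (pderiv 1 Qp) = (3/2) * a 1 ^ 2 * a 2 ^ 2 + 3 * a 1 * a 2 + 3/2 := by
      rw [hQp]; simp [pderiv_X, Pi.single_apply]; ring
    have d2 : eval a (pderiv 2 Qp) = a 1 ^ 3 * a 2 + (3/2) * a 1 ^ 2 - (1/2) * a 0 := by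
      rw [hQp]; simp [pderiv_X, Pi.single_apply]; ring
    have f0 : eval a (pderiv 0 ((X 0 - Qp ^ 2 : MvPolynomial (Fin 3) ℂ))) = 1 + u * a 2 := by
      rw [hev 0, hQu, d0]; simp [pderiv_X]; ring
    have f1 : eval a (pderiv 1 ((X 0 - Qp ^ 2 : MvPolynomial (Fin 3) ℂ)))
        = -3 * u * (a 1 * a 2 + 1) ^ 2 := by
      rw [hev 1, hQu, d1]; simp [pderiv_X, Pi.single_apply]; ring
    have f2 : eval a (pderiv 2 ((X 0 - Qp ^ 2 : MvPolynomial (Fin 3) ℂ)))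
        = -2 * u * (a 1 ^ 3 * a 2 + (3/2) * a 1 ^ 2 - (1/2) * a 0) := by
      rw [hev 2, hQu, d2]; simp [pderiv_X, Pi.single_apply]; try ring
    have g0 : 1 + u * a 2 = 0 := f0 ▸ h 0
    have g1 : -3 * u * (a 1 * a 2 + 1) ^ 2 = 0 := f1 ▸ h 1
    have g2 : -2 * u * (a 1 ^ 3 * a 2 + (3/2) * a 1 ^ 2 - (1/2) * a 0) = 0 := f2 ▸ h 2
    have hune : u ≠ 0 := by
      intro h0
      have : (1 : ℂ) = 0 := by linear_combination g0 - a 2 * h0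
      exact one_ne_zero this
    have hyz : a 1 * a 2 + 1 = 0 := by
      have hsq : (a 1 * a 2 + 1) ^ 2 = 0 := by
        rcases mul_eq_zero.mp (show (-3 * u) * (a 1 * a 2 + 1) ^ 2 = 0 by
          linear_combination g1) with h' | h'
        · exact absurd (by
            have : u = 0 := by linear_combination (-1/3 : ℂ) * h'
            exact this) hune
        · exact h'
      exact pow_eq_zero_iff (two_ne_zero) |>.mp hsq
    have hQz : a 1 ^ 3 * a 2 + (3/2) * a 1 ^ 2 - (1/2) * a 0 = 0 := by
      rcases mul_eq_zero.mp (show (-2 * u) * (a 1 ^ 3 * a 2 + (3/2) * a 1 ^ 2 - (1/2) * a 0) = 0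
          by linear_combination g2) with h' | h'
      · exact absurd (by
          have : u = 0 := by linear_combination (-1/2 : ℂ) * h'
          exact this) hune
      · exact h'
    have hx : a 0 = a 1 ^ 2 := by
      linear_combination (-2 : ℂ) * hQz + 2 * a 1 ^ 2 * hyz
    have hz0 : a 2 = 0 := by
      linear_combination 2 * g0
        - ((a 1 * a 2) ^ 2 + a 1 * a 2 + 2) * hyz + a 2 ^ 2 * hx
    have : (1 : ℂ) = 0 := by linear_combination hyz - a 1 * hz0
    exact one_ne_zero this
end

section
/- Let K be a field, let f ∈ K[x,y,z] be any polynomial, and let k ≥ 1 be an integer. Set p = x − f(x^k, y, z) (the result of substituting x^k for x in f, then subtracting from x) and q = x − f(x,y,z)^k. Then the quotient algebras K[x,y,z]/⟨p⟩ and K[x,y,z]/⟨q⟩ are isomorphic as K-algebras. -/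
open MvPolynomial

/-- Example 1 of the paper: for any field `K`, any `f ∈ K[x,y,z]` and any `k ≥ 1`,
the hypersurfaces `{x = f(x^k, y, z)}` and `{x = f(x,y,z)^k}` are isomorphic, i.e.
`K[x,y,z]/⟨x - f(x^k,y,z)⟩ ≅ K[x,y,z]/⟨x - f^k⟩`.  Here `x = X 0`, `y = X 1`,
`z = X 2`, and `f(x^k,y,z)` is obtained by the substitution `x ↦ x^k`. -/
theorem example_1_isomorphism (K : Type*) [Field K]
    (f : MvPolynomial (Fin 3) K) (k : ℕ) (hk : 1 ≤ k)
    (p q : MvPolynomial (Fin 3) K)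
    (hp : p = X 0 - aeval
      (fun i : Fin 3 => if i = 0 then (X 0 : MvPolynomial (Fin 3) K) ^ k else X i) f)
    (hq : q = X 0 - f ^ k) :
    Nonempty ((MvPolynomial (Fin 3) K ⧸ Ideal.span {p}) ≃ₐ[K]
      (MvPolynomial (Fin 3) K ⧸ Ideal.span {q})) := by
  classical
  set g : Fin 3 → MvPolynomial (Fin 3) K :=
    fun i => if i = 0 then X 0 ^ k else X i with hg
  set I : Ideal (MvPolynomial (Fin 3) K) := Ideal.span {p} with hI
  set J : Ideal (MvPolynomial (Fin 3) K) := Ideal.span {q} with hJ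
  let mkI : MvPolynomial (Fin 3) K →ₐ[K] MvPolynomial (Fin 3) K ⧸ I :=
    Ideal.Quotient.mkₐ K I
  let mkJ : MvPolynomial (Fin 3) K →ₐ[K] MvPolynomial (Fin 3) K ⧸ J :=
    Ideal.Quotient.mkₐ K J
  have hpI : mkI p = 0 := by
    show Ideal.Quotient.mkₐ K I p = 0
    rw [Ideal.Quotient.mkₐ_eq_mk, Ideal.Quotient.eq_zero_iff_mem]
    exact Ideal.subset_span (Set.mem_singleton p)
  have hqJ : mkJ q = 0 := by
    show Ideal.Quotient.mkₐ K J q = 0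
    rw [Ideal.Quotient.mkₐ_eq_mk, Ideal.Quotient.eq_zero_iff_mem]
    exact Ideal.subset_span (Set.mem_singleton q)
  have hxI : mkI (X 0) = mkI (aeval g f) := by
    rw [hp] at hpI
    rw [← sub_eq_zero, ← map_sub]
    exact hpI
  have hxJ : mkJ (X 0) = mkJ (f ^ k) := by
    rw [hq] at hqJ
    rw [← sub_eq_zero, ← map_sub]
    exact hqJ
  -- the forward map sends x ↦ f, the backward map sends x ↦ x^k
  let φ : MvPolynomial (Fin 3) K →ₐ[K] MvPolynomial (Fin 3) K ⧸ J :=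
    aeval (fun i => if i = 0 then mkJ f else mkJ (X i))
  let ψ : MvPolynomial (Fin 3) K →ₐ[K] MvPolynomial (Fin 3) K ⧸ I :=
    aeval (fun i => mkI (g i))
  have hφ0 : φ (X 0) = mkJ f := by
    show (aeval _) (X (0 : Fin 3)) = _
    rw [aeval_X, if_pos rfl]
  have hφi : ∀ i : Fin 3, i ≠ 0 → φ (X i) = mkJ (X i) := by
    intro i h
    show (aeval _) (X i) = _
    rw [aeval_X, if_neg h]
  have hψ_eval : ∀ r : MvPolynomial (Fin 3) K, ψ r = mkI (aeval g r) := by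
    intro r
    have : ψ = mkI.comp (aeval g) := by rw [comp_aeval]
    rw [this]; rfl
  have hφg : (fun i => φ (g i)) = fun i : Fin 3 => mkJ (X i) := by
    funext i
    by_cases h : i = 0
    · subst h
      have : g 0 = X 0 ^ k := if_pos rfl
      rw [this, map_pow, hφ0, ← map_pow, ← hxJ]
    · have : g i = X i := if_neg h
      rw [this, hφi i h]
  have hφ_aeval : ∀ r : MvPolynomial (Fin 3) K, φ (aeval g r) = mkJ r := by
    intro r
    have h1 : φ (aeval g r) = aeval (fun i => φ (g i)) r := by
      rw [← AlgHom.comp_apply, comp_aeval]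
    rw [h1, hφg]
    have h2 : (aeval fun i : Fin 3 => mkJ (X i) :
        MvPolynomial (Fin 3) K →ₐ[K] MvPolynomial (Fin 3) K ⧸ J)
        = mkJ.comp (aeval X) := by rw [comp_aeval]
    rw [h2, AlgHom.comp_apply, aeval_X_left_apply]
  have hφp : φ p = 0 := by
    rw [hp, map_sub, hφ_aeval, hφ0, sub_self]
  have hψq : ψ q = 0 := by
    have h0 : ψ (X 0) = mkI (X 0 ^ k) := by
      rw [hψ_eval]
      congr 1
      rw [aeval_X]; exact if_pos rfl
    have h2 : ψ (f ^ k) = mkI (X 0 ^ k) := by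
      rw [hψ_eval, map_pow, map_pow, ← hxI, ← map_pow]
    rw [hq, map_sub, h0, h2, sub_self]
  have hIker : ∀ a ∈ I, φ a = 0 := by
    intro a ha
    rw [hI, Ideal.mem_span_singleton] at ha
    obtain ⟨c, rfl⟩ := ha
    rw [map_mul, hφp, zero_mul]
  have hJker : ∀ a ∈ J, ψ a = 0 := by
    intro a ha
    rw [hJ, Ideal.mem_span_singleton] at ha
    obtain ⟨c, rfl⟩ := ha
    rw [map_mul, hψq, zero_mul]
  let Φ := Ideal.Quotient.liftₐ I φ hIker
  let Ψ := Ideal.Quotient.liftₐ J ψ hJker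
  have hΦ : ∀ r : MvPolynomial (Fin 3) K, Φ (mkI r) = φ r :=
    fun r => Ideal.Quotient.liftₐ_apply I φ hIker _
  have hΨ : ∀ r : MvPolynomial (Fin 3) K, Ψ (mkJ r) = ψ r :=
    fun r => Ideal.Quotient.liftₐ_apply J ψ hJker _
  have h1 : Φ.comp Ψ = AlgHom.id K (MvPolynomial (Fin 3) K ⧸ J) := by
    apply Ideal.Quotient.algHom_ext
    apply MvPolynomial.algHom_ext
    intro i
    by_cases h : i = 0
    · subst h
      show Φ (Ψ (mkJ (X 0))) = mkJ (X 0)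
      rw [hΨ]
      have hs : ψ (X 0) = mkI (X 0 ^ k) := by
        rw [hψ_eval]
        congr 1
        rw [aeval_X]; exact if_pos rfl
      rw [hs, hΦ, map_pow, hφ0, ← map_pow, ← hxJ]
    · show Φ (Ψ (mkJ (X i))) = mkJ (X i)
      rw [hΨ]
      have hs : ψ (X i) = mkI (X i) := by
        rw [hψ_eval]
        congr 1
        rw [aeval_X]; exact if_neg h
      rw [hs, hΦ, hφi i h]
  have h2 : Ψ.comp Φ = AlgHom.id K (MvPolynomial (Fin 3) K ⧸ I) := by
    apply Ideal.Quotient.algHom_ext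
    apply MvPolynomial.algHom_ext
    intro i
    by_cases h : i = 0
    · subst h
      show Ψ (Φ (mkI (X 0))) = mkI (X 0)
      rw [hΦ, hφ0, hΨ, hψ_eval, ← hxI]
    · show Ψ (Φ (mkI (X i))) = mkI (X i)
      rw [hΦ, hφi i h, hΨ, hψ_eval]
      congr 1
      rw [aeval_X]; exact if_neg h
  exact ⟨AlgEquiv.ofAlgHom Φ Ψ h1 h2⟩
end

section
/- In ℂ[x,y], set p = x² + xy + y³ and q = x² + y³. Then the quotient algebras ℂ[x,y]/⟨p⟩ and ℂ[x,y]/⟨q⟩ are NOT isomorphic as ℂ-algebras. -/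
/-!
An isomorphism would match the singular points of the two curves together with their tangent
cones. At the origin the node `x² + xy + y³` has the tangent cone `x (x + y)`, two distinct lines:
`x` and `x + y` are independent modulo `m²`, while `x (x + y) ≡ -y³ ∈ m³`. The cusp `x² + y³`
admits no such pair `s, t`: at a smooth point `m/m²` is a line, and at the origin comparing the
Hessian of `s t` with that of a multiple of `x² + y³`, namely `diag(2, 0)`, forces the gradients of
`s` and `t` to be proportional. Membership in `m²` and `m³` modulo the equation is read off from
first and second derivatives at the point.
-/

open MvPolynomial

theorem exists_smul_add_smul_eq_smul {K V : Type*} [Field K] [AddCommGroup V] [Module K V]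
    [Module.Finite K V] (hV : Module.finrank K V ≤ 2) (u v : V) {w : V} (hw : w ≠ 0) :
    ∃ l μ c : K, ¬(l = 0 ∧ μ = 0) ∧ l • u + μ • v = c • w := by
  have hdep : ¬LinearIndependent K ![u, v, w] := fun h => by
    have := h.fintype_card_le_finrank
    simp only [Fintype.card_fin] at this
    omega
  obtain ⟨g, hg, i, hi⟩ := Fintype.not_linearIndependent_iff.1 hdep
  simp only [Fin.sum_univ_three, Matrix.cons_val] at hg
  refine ⟨g 0, g 1, -g 2, fun ⟨h0, h1⟩ => hi ?_, ?_⟩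
  · have h2 : g 2 = 0 := by simpa [h0, h1, hw] using hg
    fin_cases i <;> assumption
  · rw [neg_smul, eq_neg_iff_add_eq_zero, hg]

theorem exists_smul_add_smul_eq_zero_of_mul_eq_mul {K : Type*} [Field K] {u v : Fin 2 → K}
    (h : u 0 * v 1 = u 1 * v 0) : ∃ l μ : K, ¬(l = 0 ∧ μ = 0) ∧ l • u + μ • v = 0 := by
  obtain ⟨w, hw, hmul⟩ := Matrix.exists_mulVec_eq_zero_iff.2
    (show (Matrix.of ![![u 0, v 0], ![u 1, v 1]]).det = 0 by
      rw [Matrix.det_fin_two_of, h, mul_comm, sub_self])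
  refine ⟨w 0, w 1, fun ⟨h0, h1⟩ => hw (funext (Fin.forall_fin_two.2 ⟨h0, h1⟩)), ?_⟩
  ext i
  fin_cases i
  · simpa [Matrix.mulVec, Matrix.vecHead, Matrix.vecTail, mul_comm] using congrFun hmul 0
  · simpa [Matrix.mulVec, Matrix.vecHead, Matrix.vecTail, mul_comm] using congrFun hmul 1

theorem Derivation.apply_mem_pow_of_mem_pow_succ {R A : Type*} [CommSemiring R]
    [CommSemiring A] [Algebra R A] (D : Derivation R A A) (I : Ideal A) :
    ∀ (n : ℕ) {a : A}, a ∈ I ^ (n + 1) → D a ∈ I ^ n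
  | 0, _, _ => by simp
  | n + 1, a, ha => by
    rw [pow_succ] at ha
    refine Submodule.mul_induction_on ha (fun b hb c hc => ?_) fun b c hb hc => by
      rw [map_add]
      exact add_mem hb hc
    rw [D.leibniz, smul_eq_mul, smul_eq_mul]
    refine add_mem (Ideal.mul_mem_right _ _ hb) ?_
    rw [pow_succ']
    exact Ideal.mul_mem_mul hc (D.apply_mem_pow_of_mem_pow_succ I n hb)

/-- The classes of `s` and `t` in `m/m²` are independent while `s t` vanishes in `m²/m³`: the
tangent cone at `m` contains two distinct lines. -/
def HasDistinctTangents (K A : Type*) [CommSemiring K] [CommRing A] [Algebra K A] : Prop :=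
  ∃ m : Ideal A, m.IsMaximal ∧ ∃ s ∈ m, ∃ t ∈ m, s * t ∈ m ^ 3 ∧
    ∀ l μ : K, l • s + μ • t ∈ m ^ 2 → l = 0 ∧ μ = 0

theorem HasDistinctTangents.of_algEquiv {K A B : Type*} [CommSemiring K] [CommRing A]
    [CommRing B] [Algebra K A] [Algebra K B] (e : A ≃ₐ[K] B) (h : HasDistinctTangents K A) :
    HasDistinctTangents K B := by
  obtain ⟨m, hm, s, hs, t, ht, hst, hind⟩ := h
  refine ⟨m.map e, inferInstance, e s, Ideal.mem_map_of_mem _ hs, e t,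
    Ideal.mem_map_of_mem _ ht, ?_, fun l μ h => hind l μ ?_⟩
  · rw [← map_mul, ← Ideal.map_pow]
    exact Ideal.mem_map_of_mem _ hst
  · rw [← Ideal.map_pow, ← map_smul, ← map_smul, ← map_add] at h
    exact (Ideal.apply_mem_of_equiv_iff (f := e.toRingEquiv)).1 h

namespace MvPolynomial

variable {R σ : Type*} [CommRing R] {x : σ → R}

theorem ker_eval_eq_span_X_sub_C [Fintype σ] (x : σ → R) :
    RingHom.ker (eval x) = Ideal.span (Set.range fun i => X i - C (x i)) := by
  refine le_antisymm (fun f hf => ?_) (Ideal.span_le.2 ?_)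
  · suffices ∀ f, f - C (eval x f) ∈ Ideal.span (Set.range fun i => X i - C (x i)) by
      simpa [RingHom.mem_ker.1 hf] using this f
    intro f
    induction f using MvPolynomial.induction_on with
    | C a => simp
    | add f g hf hg => simpa [add_sub_add_comm] using add_mem hf hg
    | mul_X f i hf =>
      have hi : X i - C (x i) ∈ Ideal.span (Set.range fun i => X i - C (x i)) :=
        Ideal.subset_span ⟨i, rfl⟩
      convert add_mem (Ideal.mul_mem_right (X i) _ hf) (Ideal.mul_mem_left _ (C (eval x f)) hi)
        using 1
      simp only [eval_X, map_mul]
      ring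
  · rintro _ ⟨i, rfl⟩
    simp

theorem mem_ker_eval_sq_of_eval_pderiv_eq_zero [Fintype σ] {f : MvPolynomial σ R}
    (hf : eval x f = 0) (hdf : ∀ i, eval x (pderiv i f) = 0) :
    f ∈ RingHom.ker (eval x) ^ 2 := by
  classical
  have hf' : f ∈ RingHom.ker (eval x) := hf
  rw [ker_eval_eq_span_X_sub_C, Ideal.mem_span_range_iff_exists_fun] at hf'
  obtain ⟨g, rfl⟩ := hf'
  have hg : ∀ i, eval x (g i) = 0 := fun i => by
    simpa [pderiv_X, Pi.single_apply, apply_ite (eval x)] using hdf i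
  rw [pow_two]
  exact Ideal.sum_mem _ fun i _ => Ideal.mul_mem_mul (hg i) (by simp)

theorem mem_ker_eval_sq_iff [Fintype σ] {f : MvPolynomial σ R} :
    f ∈ RingHom.ker (eval x) ^ 2 ↔ eval x f = 0 ∧ ∀ i, eval x (pderiv i f) = 0 :=
  ⟨fun hf => ⟨Ideal.pow_le_self two_ne_zero hf,
    fun i => by simpa using (pderiv i).apply_mem_pow_of_mem_pow_succ _ 1 hf⟩,
    fun ⟨hf, hdf⟩ => mem_ker_eval_sq_of_eval_pderiv_eq_zero hf hdf⟩

theorem mem_ker_eval_sq_sup_span_singleton_iff [Fintype σ] {f q : MvPolynomial σ R}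
    (hf : eval x f = 0) (hq : eval x q = 0) :
    f ∈ RingHom.ker (eval x) ^ 2 ⊔ Ideal.span {q} ↔
      ∃ c, ∀ i, eval x (pderiv i f) = c * eval x (pderiv i q) := by
  constructor
  · intro h
    obtain ⟨u, hu, _, hv, rfl⟩ := Submodule.mem_sup.1 h
    obtain ⟨g, rfl⟩ := Ideal.mem_span_singleton'.1 hv
    refine ⟨eval x g, fun i => ?_⟩
    simp [Derivation.leibniz, (mem_ker_eval_sq_iff.1 hu).2 i, hq]
  · rintro ⟨c, hc⟩
    have hsub : f - C c * q ∈ RingHom.ker (eval x) ^ 2 :=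
      mem_ker_eval_sq_iff.2 ⟨by simp [hf, hq], fun i => by simp [hc]⟩
    exact Submodule.mem_sup.2 ⟨_, hsub, C c * q,
      Ideal.mul_mem_left _ _ (Ideal.mem_span_singleton_self q), sub_add_cancel _ _⟩

theorem exists_eval_pderiv_pderiv_eq_mul {f q : MvPolynomial σ R}
    (hq : eval x q = 0) (hdq : ∀ i, eval x (pderiv i q) = 0)
    (hf : f ∈ RingHom.ker (eval x) ^ 3 ⊔ Ideal.span {q}) :
    ∃ c, ∀ i j, eval x (pderiv i (pderiv j f)) = c * eval x (pderiv i (pderiv j q)) := by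
  obtain ⟨u, hu, _, hv, rfl⟩ := Submodule.mem_sup.1 hf
  obtain ⟨g, rfl⟩ := Ideal.mem_span_singleton'.1 hv
  refine ⟨eval x g, fun i j => ?_⟩
  have hu' : pderiv i (pderiv j u) ∈ RingHom.ker (eval x) := by
    simpa using (pderiv i).apply_mem_pow_of_mem_pow_succ _ 1
      ((pderiv j).apply_mem_pow_of_mem_pow_succ _ 2 hu)
  simp [Derivation.leibniz, RingHom.mem_ker.1 hu', hq, hdq]

theorem eval_pderiv_pderiv_mul {f g : MvPolynomial σ R}
    (hf : eval x f = 0) (hg : eval x g = 0) (i j : σ) :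
    eval x (pderiv i (pderiv j (f * g))) =
      eval x (pderiv i f) * eval x (pderiv j g) + eval x (pderiv j f) * eval x (pderiv i g) := by
  simp only [Derivation.leibniz, smul_eq_mul, map_add, map_mul, hf, hg, zero_mul, zero_add]
  ring

def HasDistinctTangentsAt (f : MvPolynomial σ R) (x : σ → R) : Prop :=
  eval x f = 0 ∧ ∃ S ∈ RingHom.ker (eval x), ∃ T ∈ RingHom.ker (eval x),
    S * T ∈ RingHom.ker (eval x) ^ 3 ⊔ Ideal.span {f} ∧
    ∀ l μ : R, l • S + μ • T ∈ RingHom.ker (eval x) ^ 2 ⊔ Ideal.span {f} → l = 0 ∧ μ = 0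

end MvPolynomial

theorem hasDistinctTangents_quotient_span_singleton_iff {K σ : Type*} [Field K] [IsAlgClosed K]
    [Finite σ] (f : MvPolynomial σ K) :
    HasDistinctTangents K (MvPolynomial σ K ⧸ Ideal.span {f}) ↔
      ∃ x, f.HasDistinctTangentsAt x := by
  let π := Ideal.Quotient.mk (Ideal.span {f})
  have hπ_smul (l : K) (g : MvPolynomial σ K) : π (l • g) = l • π g :=
    map_smul (Ideal.Quotient.mkₐ K _) l g
  have hπ_mem_pow (x : σ → K) (n : ℕ) (g : MvPolynomial σ K) :
      π g ∈ ((RingHom.ker (eval x)).map π) ^ n ↔ g ∈ RingHom.ker (eval x) ^ n ⊔ Ideal.span {f} := by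
    rw [← Ideal.map_pow, Ideal.mem_quotient_iff_mem_sup]
  constructor
  · rintro ⟨m, hm, s, hs, t, ht, hst, hind⟩
    obtain ⟨x, hx⟩ := isMaximal_iff_eq_vanishingIdeal_singleton.1
      (Ideal.comap_isMaximal_of_surjective π Ideal.Quotient.mk_surjective (K := m))
    replace hx : m.comap π = RingHom.ker (eval x) := by
      ext g
      simp [hx]
    have hf : eval x f = 0 := by
      rw [← RingHom.mem_ker, ← hx, Ideal.mem_comap, Ideal.Quotient.eq_zero_iff_mem.2
        (Ideal.mem_span_singleton_self f)]
      exact m.zero_mem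
    obtain rfl : m = (RingHom.ker (eval x)).map π := by
      rw [← hx, Ideal.map_comap_of_surjective π Ideal.Quotient.mk_surjective]
    have hle : Ideal.span {f} ≤ RingHom.ker (eval x) := (Ideal.span_singleton_le_iff_mem _).2 hf
    obtain ⟨S, rfl⟩ := Ideal.Quotient.mk_surjective s
    obtain ⟨T, rfl⟩ := Ideal.Quotient.mk_surjective t
    refine ⟨x, hf, S, (Ideal.mem_quotient_iff_mem hle).1 hs, T,
      (Ideal.mem_quotient_iff_mem hle).1 ht, (hπ_mem_pow x 3 _).1 hst, fun l μ h => hind l μ ?_⟩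
    rw [← hπ_smul, ← hπ_smul, ← map_add, hπ_mem_pow]
    exact h
  · rintro ⟨x, hf, S, hS, T, hT, hST, hind⟩
    have : (RingHom.ker (eval x)).IsMaximal :=
      RingHom.ker_isMaximal_of_surjective _ fun c => ⟨C c, eval_C c⟩
    refine ⟨_, Ideal.IsMaximal.map_of_surjective_of_ker_le Ideal.Quotient.mk_surjective ?_,
      π S, Ideal.mem_map_of_mem _ hS, π T, Ideal.mem_map_of_mem _ hT,
      (hπ_mem_pow x 3 _).2 hST, fun l μ h => hind l μ ?_⟩
    · rwa [Ideal.mk_ker, Ideal.span_singleton_le_iff_mem]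
    · rwa [← hπ_smul, ← hπ_smul, ← map_add, hπ_mem_pow] at h

noncomputable def nodalCubic (R : Type*) [CommRing R] : MvPolynomial (Fin 2) R :=
  X 0 ^ 2 + X 0 * X 1 + X 1 ^ 3

noncomputable def cuspidalCubic (R : Type*) [CommRing R] : MvPolynomial (Fin 2) R :=
  X 0 ^ 2 + X 1 ^ 3

theorem nodalCubic_hasDistinctTangentsAt_zero (R : Type*) [CommRing R] :
    (nodalCubic R).HasDistinctTangentsAt 0 := by
  have hp : eval 0 (nodalCubic R) = 0 := by simp [nodalCubic]
  refine ⟨hp, X 0, by simp, X 0 + X 1, by simp, ?_, fun l μ h => ?_⟩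
  · have : X 0 * (X 0 + X 1) = -X 1 ^ 3 + nodalCubic R := by rw [nodalCubic]; ring
    rw [this]
    exact Submodule.add_mem_sup (neg_mem (Ideal.pow_mem_pow (by simp) 3))
      (Ideal.mem_span_singleton_self _)
  · obtain ⟨c, hc⟩ := (mem_ker_eval_sq_sup_span_singleton_iff (by simp) hp).1 h
    have h0 : l + μ = 0 := by simpa [nodalCubic] using hc 0
    have h1 : μ = 0 := by simpa [nodalCubic] using hc 1
    exact ⟨by linear_combination h0 - h1, h1⟩

theorem cuspidalCubic_not_hasDistinctTangentsAt {K : Type*} [Field K] [CharZero K]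
    (x : Fin 2 → K) : ¬(cuspidalCubic K).HasDistinctTangentsAt x := by
  rintro ⟨hq, S, hS, T, hT, hST, hind⟩
  rw [RingHom.mem_ker] at hS hT
  let grad (f : MvPolynomial (Fin 2) K) : Fin 2 → K := fun i => eval x (pderiv i f)
  suffices ∃ l μ c : K, ¬(l = 0 ∧ μ = 0) ∧ l • grad S + μ • grad T = c • grad (cuspidalCubic K) by
    obtain ⟨l, μ, c, hne, hc⟩ := this
    refine hne (hind l μ ((mem_ker_eval_sq_sup_span_singleton_iff (by simp [hS, hT]) hq).2
      ⟨c, fun i => ?_⟩))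
    simpa [grad] using congrFun hc i
  by_cases hsing : grad (cuspidalCubic K) = 0
  · have hx : x 1 = 0 := by simpa [grad, cuspidalCubic] using congrFun hsing 1
    obtain ⟨c, hc⟩ := exists_eval_pderiv_pderiv_eq_mul hq (congrFun hsing) hST
    have h11 : grad S 1 * grad T 1 = 0 := by
      have h := hc 1 1
      rw [eval_pderiv_pderiv_mul hS hT] at h
      simpa [grad, cuspidalCubic, hx] using h
    have h01 : grad S 0 * grad T 1 + grad S 1 * grad T 0 = 0 := by
      have h := hc 0 1
      rw [eval_pderiv_pderiv_mul hS hT] at h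
      simpa [grad, cuspidalCubic, hx] using h
    have hdet : grad S 0 * grad T 1 = grad S 1 * grad T 0 := by
      rcases mul_eq_zero.1 h11 with h | h <;> rw [h] at h01 ⊢
      · linear_combination h01
      · linear_combination -h01
    obtain ⟨l, μ, hne, h⟩ := exists_smul_add_smul_eq_zero_of_mul_eq_mul hdet
    exact ⟨l, μ, 0, hne, by rw [h, zero_smul]⟩
  · exact exists_smul_add_smul_eq_smul (by simp) _ _ hsing

/-- Example 2.1 of the paper: with `x = X 0`, `y = X 1` in `ℂ[x,y]`, the quotient
algebras `ℂ[x,y]/⟨x² + xy + y³⟩` and `ℂ[x,y]/⟨x² + y³⟩` are not isomorphic. -/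
theorem example_2_1_non_isomorphism
    (p q : MvPolynomial (Fin 2) ℂ)
    (hp : p = X 0 ^ 2 + X 0 * X 1 + X 1 ^ 3)
    (hq : q = X 0 ^ 2 + X 1 ^ 3) :
    ¬ Nonempty ((MvPolynomial (Fin 2) ℂ ⧸ Ideal.span {p}) ≃ₐ[ℂ]
      (MvPolynomial (Fin 2) ℂ ⧸ Ideal.span {q})) := by
  subst hp hq
  rintro ⟨e⟩
  have hnode := (hasDistinctTangents_quotient_span_singleton_iff (nodalCubic ℂ)).2
    ⟨0, nodalCubic_hasDistinctTangentsAt_zero ℂ⟩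
  obtain ⟨x, hx⟩ :=
    (hasDistinctTangents_quotient_span_singleton_iff (cuspidalCubic ℂ)).1 (hnode.of_algEquiv e)
  exact cuspidalCubic_not_hasDistinctTangentsAt x hx
end

section
/- In ℂ[x,y], set p = x − y − x²y − x²y² and q = x − (x + y + xy)²·y. Then: (a) the quotient algebras ℂ[x,y]/⟨p⟩ and ℂ[x,y]/⟨q⟩ are isomorphic as ℂ-algebras; (b) the set of points of ℂ² at which both partial derivatives of p vanish has exactly 4 elements; (c) the set of points of ℂ² at which both partial derivatives of q vanish has exactly 3 elements; and consequently (d) there is no ℂ-algebra automorphism σ of ℂ[x,y] such that σ(⟨p⟩) = ⟨q⟩. -/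
/-!
The curves are isomorphic because the substitutions `x ↦ x + y + xy` and `x ↦ x²y` (fixing `y`)
carry `p` to a multiple of `q` and `q` to a multiple of `p`, and are mutually inverse modulo these
equations. An automorphism `σ` of `ℂ[x,y]` with `σ⟨p⟩ = ⟨q⟩` would make `q` a nonzero constant
times `σ p`, and by the chain rule the polynomial bijection of `ℂ²` dual to `σ` maps the common
zeros of `grad q` onto those of `grad p`. Eliminating `x` from `grad p = 0` and `grad q = 0` leaves
separable polynomials in `y` of degree 4 and 3 respectively, so these zero sets have different
cardinalities.
-/

open MvPolynomial

namespace Ideal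

variable {R A B : Type*} [CommRing R] [CommRing A] [CommRing B] [Algebra R A] [Algebra R B]
  {I : Ideal A} {J : Ideal B}

noncomputable def quotientEquivAlgOfCompEq (F : A →ₐ[R] B) (G : B →ₐ[R] A)
    (hF : I ≤ J.comap F) (hG : J ≤ I.comap G)
    (hGF : (Quotient.mkₐ R I).comp (G.comp F) = Quotient.mkₐ R I)
    (hFG : (Quotient.mkₐ R J).comp (F.comp G) = Quotient.mkₐ R J) :
    (A ⧸ I) ≃ₐ[R] B ⧸ J :=
  AlgEquiv.ofAlgHom (quotientMapₐ J F hF) (quotientMapₐ I G hG)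
    (Quotient.algHom_ext R (by ext x; simpa using AlgHom.congr_fun hFG x))
    (Quotient.algHom_ext R (by ext x; simpa using AlgHom.congr_fun hGF x))

end Ideal

namespace MvPolynomial

variable {ι R : Type*} [CommRing R]

def criticalSet (f : MvPolynomial ι R) : Set (ι → R) :=
  {a | ∀ i, eval a (pderiv i f) = 0}

theorem eval_comap {κ : Type*} (τ : MvPolynomial ι R →ₐ[R] MvPolynomial κ R) (a : κ → R)
    (f : MvPolynomial ι R) : eval (comap τ a) f = eval a (τ f) :=
  (congrArg (· f) (aeval_unique ((aeval a).comp τ))).symm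

theorem pderiv_algHom [Fintype ι] (τ : MvPolynomial ι R →ₐ[R] MvPolynomial ι R)
    (f : MvPolynomial ι R) (i : ι) :
    pderiv i (τ f) = ∑ j, τ (pderiv j f) * pderiv i (τ (X j)) := by
  classical
  induction f using MvPolynomial.induction_on with
  | C c => simp
  | add f g hf hg => simp only [map_add, hf, hg, add_mul, Finset.sum_add_distrib]
  | mul_X f j ih =>
    simp only [map_mul, Derivation.leibniz, ih, pderiv_X, smul_eq_mul, Finset.mul_sum]
    simp [Pi.single_apply, add_mul, Finset.sum_add_distrib, mul_assoc, apply_ite τ, ite_mul]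

theorem mem_criticalSet_of_comap_mem [Fintype ι] (τ : MvPolynomial ι R →ₐ[R] MvPolynomial ι R)
    {f : MvPolynomial ι R} {a : ι → R} (ha : comap τ a ∈ criticalSet f) :
    a ∈ criticalSet (τ f) := fun i => by
  rw [pderiv_algHom]
  simp only [map_sum, eval_mul, ← eval_comap, ha _, zero_mul, Finset.sum_const_zero]

theorem criticalSet_algEquiv [Fintype ι] (σ : MvPolynomial ι R ≃ₐ[R] MvPolynomial ι R)
    (f : MvPolynomial ι R) : criticalSet (σ f) = comapEquiv σ ⁻¹' criticalSet f := by
  ext a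
  refine ⟨fun ha => ?_, mem_criticalSet_of_comap_mem σ.toAlgHom⟩
  have := mem_criticalSet_of_comap_mem σ.symm.toAlgHom (f := σ f) (a := comapEquiv σ a)
    (by change (comapEquiv σ).symm (comapEquiv σ a) ∈ _; rwa [Equiv.symm_apply_apply])
  simpa using this

theorem ncard_criticalSet_algEquiv [Fintype ι] (σ : MvPolynomial ι R ≃ₐ[R] MvPolynomial ι R)
    (f : MvPolynomial ι R) : (criticalSet (σ f)).ncard = (criticalSet f).ncard := by
  rw [criticalSet_algEquiv, Set.ncard_preimage_of_injective_subset_range (comapEquiv σ).injective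
    ((comapEquiv σ).surjective.range_eq ▸ Set.subset_univ _)]

theorem criticalSet_C_mul {r : R} (hr : IsUnit r) (f : MvPolynomial ι R) :
    criticalSet (C r * f) = criticalSet f := by
  ext a
  simp only [criticalSet, Set.mem_ofPred_eq, pderiv_C_mul, eval_mul, eval_C, hr.mul_right_eq_zero]

theorem criticalSet_eq_of_associated [IsReduced R] {f g : MvPolynomial ι R}
    (h : Associated f g) : criticalSet f = criticalSet g := by
  obtain ⟨u, rfl⟩ := h
  obtain ⟨r, hr, hu⟩ := isUnit_iff_eq_C_of_isReduced.mp u.isUnit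
  rw [hu, mul_comm, criticalSet_C_mul hr]

theorem ncard_criticalSet_eq_of_map_span_eq [IsDomain R] [Fintype ι]
    (σ : MvPolynomial ι R ≃ₐ[R] MvPolynomial ι R) {f g : MvPolynomial ι R}
    (h : Ideal.map σ (Ideal.span {f}) = Ideal.span {g}) :
    (criticalSet g).ncard = (criticalSet f).ncard := by
  rw [Ideal.map_span, Set.image_singleton, Ideal.span_singleton_eq_span_singleton] at h
  rw [← criticalSet_eq_of_associated h, ncard_criticalSet_algEquiv]

end MvPolynomial

namespace Polynomial

variable {K : Type*} [Field K]

theorem separable_of_add_mul_derivative_eq_C {f a b : K[X]} {c : K} (hc : c ≠ 0)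
    (h : a * f + b * derivative f = C c) : f.Separable :=
  ⟨C c⁻¹ * a, C c⁻¹ * b, by
    rw [mul_assoc, mul_assoc, ← mul_add, h, ← C_mul, inv_mul_cancel₀ hc, C_1]⟩

theorem ncard_setOf_isRoot [IsAlgClosed K] {f : K[X]} (hf : f.Separable) :
    {y | f.IsRoot y}.ncard = f.natDegree := by
  classical
  have hroots : {y | f.IsRoot y} = ↑f.roots.toFinset := by
    ext y; simp [hf.ne_zero]
  rw [hroots, Set.ncard_coe_finset, Multiset.toFinset_card_of_nodup (nodup_roots hf),
    IsAlgClosed.card_roots_eq_natDegree]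

theorem ncard_eq_natDegree_of_mem_iff_isRoot [IsAlgClosed K] {f : K[X]} (hf : f.Separable)
    {S : Set (Fin 2 → K)} (φ : K → K) (hS : ∀ a, a ∈ S ↔ f.IsRoot (a 1) ∧ a 0 = φ (a 1)) :
    S.ncard = f.natDegree := by
  have hgraph : S = (fun y => ![φ y, y]) '' {y | f.IsRoot y} := by
    ext a
    rw [hS]
    constructor
    · rintro ⟨hroot, h0⟩
      exact ⟨a 1, hroot, by ext i; fin_cases i <;> simp [h0]⟩
    · rintro ⟨y, hy, rfl⟩
      simpa using hy
  rw [hgraph, Set.ncard_image_of_injective _ (fun y z h => by simpa using congrFun h 1),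
    ncard_setOf_isRoot hf]

end Polynomial

noncomputable def curveP : MvPolynomial (Fin 2) ℂ := X 0 - X 1 - X 0 ^ 2 * X 1 - X 0 ^ 2 * X 1 ^ 2

noncomputable def curveQ : MvPolynomial (Fin 2) ℂ := X 0 - (X 0 + X 1 + X 0 * X 1) ^ 2 * X 1

noncomputable def curvePToCurveQ : MvPolynomial (Fin 2) ℂ →ₐ[ℂ] MvPolynomial (Fin 2) ℂ :=
  aeval ![X 0 + X 1 + X 0 * X 1, X 1]

noncomputable def curveQToCurveP : MvPolynomial (Fin 2) ℂ →ₐ[ℂ] MvPolynomial (Fin 2) ℂ :=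
  aeval ![X 0 ^ 2 * X 1, X 1]

noncomputable def quotientCurvePEquivQuotientCurveQ :
    (MvPolynomial (Fin 2) ℂ ⧸ Ideal.span {curveP}) ≃ₐ[ℂ]
      (MvPolynomial (Fin 2) ℂ ⧸ Ideal.span {curveQ}) := by
  refine Ideal.quotientEquivAlgOfCompEq curvePToCurveQ curveQToCurveP ?_ ?_ ?_ ?_
  · rw [Ideal.span_singleton_le_iff_mem, Ideal.mem_comap, Ideal.mem_span_singleton]
    exact ⟨1 + X 1, by simp [curveP, curveQ, curvePToCurveQ]; ring⟩
  · rw [Ideal.span_singleton_le_iff_mem, Ideal.mem_comap, Ideal.mem_span_singleton]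
    exact ⟨X 1 * (X 0 + X 1 + X 0 ^ 2 * X 1 + X 0 ^ 2 * X 1 ^ 2),
      by simp [curveP, curveQ, curveQToCurveP]; ring⟩
  all_goals
    refine MvPolynomial.algHom_ext (Fin.forall_fin_two.mpr ⟨?_, ?_⟩) <;>
      simp only [AlgHom.comp_apply, Ideal.Quotient.mkₐ_eq_mk,
        Ideal.Quotient.mk_eq_mk_iff_sub_mem, Ideal.mem_span_singleton]
  · exact ⟨-1, by simp [curveP, curvePToCurveQ, curveQToCurveP]; ring⟩
  · exact ⟨0, by simp [curvePToCurveQ, curveQToCurveP]⟩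
  · exact ⟨-1, by simp [curveQ, curvePToCurveQ, curveQToCurveP]⟩
  · exact ⟨0, by simp [curvePToCurveQ, curveQToCurveP]⟩

theorem grad_curveP_eq_zero_iff (x y : ℂ) :
    (1 - 2 * x * y - 2 * x * y ^ 2 = 0 ∧ 1 + x ^ 2 + 2 * x ^ 2 * y = 0) ↔
      4 * y ^ 4 + 8 * y ^ 3 + 4 * y ^ 2 + 2 * y + 1 = 0 ∧ x = (2 * y * (1 + y))⁻¹ := by
  constructor
  · rintro ⟨h1, h2⟩
    have hx : x * (2 * y * (1 + y)) = 1 := by linear_combination -h1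
    refine ⟨?_, eq_inv_of_mul_eq_one_left hx⟩
    linear_combination (1 + 2 * y + 2 * x * y + 6 * x * y ^ 2 + 4 * x * y ^ 3) * h1 +
      (4 * y ^ 2 + 8 * y ^ 3 + 4 * y ^ 4) * h2
  · rintro ⟨hy, rfl⟩
    have hy0 : y ≠ 0 := by rintro rfl; norm_num at hy
    have hy1 : 1 + y ≠ 0 := fun h => by
      rw [show y = -1 by linear_combination h] at hy; norm_num at hy
    field_simp
    exact ⟨by ring, by linear_combination hy⟩

theorem grad_curveQ_eq_zero_iff (x y : ℂ) :
    (1 - 2 * (x + y + x * y) * (1 + y) * y = 0 ∧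
        2 * (x + y + x * y) * (1 + x) * y + (x + y + x * y) ^ 2 = 0) ↔
      4 * y ^ 3 + 4 * y ^ 2 + 3 * y + 1 = 0 ∧ x = -3 * y / (1 + 3 * y) := by
  constructor
  · rintro ⟨h1, h2⟩
    -- `∂q/∂y = -s (x + 3y + 3xy)` with `s = x + y + xy`, and `s ≠ 0` by the first equation.
    have hs : x + y + x * y ≠ 0 := fun h =>
      one_ne_zero (by linear_combination h1 + 2 * y * (1 + y) * h : (1 : ℂ) = 0)
    have hL : x + 3 * y + 3 * x * y = 0 := (mul_eq_zero.mp
      (by linear_combination h2 : (x + y + x * y) * (x + 3 * y + 3 * x * y) = 0)).resolve_left hs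
    have h3 : 1 + 3 * y ≠ 0 := fun h =>
      one_ne_zero (by linear_combination h - hL + x * h : (1 : ℂ) = 0)
    refine ⟨by linear_combination (1 + 3 * y) * h1 + (2 * y + 4 * y ^ 2 + 2 * y ^ 3) * hL, ?_⟩
    field_simp
    linear_combination hL
  · rintro ⟨hy, rfl⟩
    have h3 : 1 + 3 * y ≠ 0 := fun h => by
      rw [show y = -1 / 3 by linear_combination h / 3] at hy; norm_num at hy
    field_simp
    exact ⟨by linear_combination hy, by ring⟩

local notation "Y" => (Polynomial.X : Polynomial ℂ)

noncomputable def eliminantP : Polynomial ℂ := 4 * Y ^ 4 + 8 * Y ^ 3 + 4 * Y ^ 2 + 2 * Y + 1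

noncomputable def eliminantQ : Polynomial ℂ := 4 * Y ^ 3 + 4 * Y ^ 2 + 3 * Y + 1

theorem separable_eliminantP : eliminantP.Separable :=
  Polynomial.separable_of_add_mul_derivative_eq_C (a := 56 - 224 * Y - 288 * Y ^ 2)
    (b := 15 - 4 * Y + 92 * Y ^ 2 + 72 * Y ^ 3) (c := 86) (by norm_num)
    (by simp [eliminantP, Polynomial.C_ofNat]; ring)

theorem separable_eliminantQ : eliminantQ.Separable :=
  Polynomial.separable_of_add_mul_derivative_eq_C (a := -2 - 30 * Y)
    (b := 3 + 4 * Y + 10 * Y ^ 2) (c := 7) (by norm_num)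
    (by simp [eliminantQ, Polynomial.C_ofNat]; ring)

theorem mem_criticalSet_curveP_iff (a : Fin 2 → ℂ) :
    a ∈ criticalSet curveP ↔ eliminantP.IsRoot (a 1) ∧ a 0 = (2 * a 1 * (1 + a 1))⁻¹ := by
  have h0 : eval a (pderiv 0 curveP) = 1 - 2 * a 0 * a 1 - 2 * a 0 * a 1 ^ 2 := by
    simp [curveP]; ring
  have h1 : eval a (pderiv 1 curveP) = -(1 + a 0 ^ 2 + 2 * a 0 ^ 2 * a 1) := by
    simp [curveP]; ring
  rw [criticalSet, Set.mem_ofPred_eq, Fin.forall_fin_two, h0, h1, neg_eq_zero,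
    grad_curveP_eq_zero_iff]
  simp [eliminantP]

theorem mem_criticalSet_curveQ_iff (a : Fin 2 → ℂ) :
    a ∈ criticalSet curveQ ↔ eliminantQ.IsRoot (a 1) ∧ a 0 = -3 * a 1 / (1 + 3 * a 1) := by
  have h0 : eval a (pderiv 0 curveQ) = 1 - 2 * (a 0 + a 1 + a 0 * a 1) * (1 + a 1) * a 1 := by
    simp [curveQ]; ring
  have h1 : eval a (pderiv 1 curveQ) =
      -(2 * (a 0 + a 1 + a 0 * a 1) * (1 + a 0) * a 1 + (a 0 + a 1 + a 0 * a 1) ^ 2) := by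
    simp [curveQ]; ring
  rw [criticalSet, Set.mem_ofPred_eq, Fin.forall_fin_two, h0, h1, neg_eq_zero,
    grad_curveQ_eq_zero_iff]
  simp [eliminantQ]

theorem ncard_criticalSet_curveP : (criticalSet curveP).ncard = 4 := by
  rw [Polynomial.ncard_eq_natDegree_of_mem_iff_isRoot separable_eliminantP
    (fun y => (2 * y * (1 + y))⁻¹) mem_criticalSet_curveP_iff]
  unfold eliminantP
  compute_degree!

theorem ncard_criticalSet_curveQ : (criticalSet curveQ).ncard = 3 := by
  rw [Polynomial.ncard_eq_natDegree_of_mem_iff_isRoot separable_eliminantQ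
    (fun y => -3 * y / (1 + 3 * y)) mem_criticalSet_curveQ_iff]
  unfold eliminantQ
  compute_degree!

/-- Example 3.4 of the paper: with `x = X 0`, `y = X 1` in `ℂ[x,y]`,
`p = x - y - x²y - x²y²` and `q = x - (x + y + xy)²·y`: (a) the quotient algebras are
isomorphic; (b) `grad p` has exactly 4 common zeros; (c) `grad q` has exactly 3 common
zeros; and (d) no `ℂ`-algebra automorphism of `ℂ[x,y]` maps `⟨p⟩` onto `⟨q⟩`. -/
theorem example_3_4
    (p q : MvPolynomial (Fin 2) ℂ)
    (hp : p = X 0 - X 1 - X 0 ^ 2 * X 1 - X 0 ^ 2 * X 1 ^ 2)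
    (hq : q = X 0 - (X 0 + X 1 + X 0 * X 1) ^ 2 * X 1) :
    Nonempty ((MvPolynomial (Fin 2) ℂ ⧸ Ideal.span {p}) ≃ₐ[ℂ]
      (MvPolynomial (Fin 2) ℂ ⧸ Ideal.span {q})) ∧
    {a : Fin 2 → ℂ | ∀ i, eval a (pderiv i p) = 0}.ncard = 4 ∧
    {a : Fin 2 → ℂ | ∀ i, eval a (pderiv i q) = 0}.ncard = 3 ∧
    ¬ ∃ σ : MvPolynomial (Fin 2) ℂ ≃ₐ[ℂ] MvPolynomial (Fin 2) ℂ,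
      Ideal.map σ (Ideal.span {p}) = Ideal.span {q} := by
  subst hp hq
  refine ⟨⟨quotientCurvePEquivQuotientCurveQ⟩, ncard_criticalSet_curveP,
    ncard_criticalSet_curveQ, ?_⟩
  rintro ⟨σ, hσ⟩
  have h := ncard_criticalSet_eq_of_map_span_eq σ hσ
  exact absurd (ncard_criticalSet_curveQ.symm.trans (h.trans ncard_criticalSet_curveP))
    (by norm_num)
end
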